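/- arXiv:0806.4949 — 6 statements merged into one kernel-verified Lean document; each statement's English description precedes it below -/
import Mathlib

section
/- Every simple MV-algebra embeds into the standard MV-algebra [0,1]_MV; that is, [0,1]_MV is the maximum simple MV-algebra. -/
/-- The operations of an MV-algebra ⟨A, ∧, ∨, ⊙, →, 0, 1⟩. -/
structure MVOps (α : Type*) where
  meet : α → α → α
  join : α → α → α
  odot : α → α → α
  impl : α → α → α
  zero : α
  one : α

namespace MVOps
variable {α : Type*}
/-- Negation ¬x = x → 0. -/
def neg (M : MVOps α) (x : α) : α := M.impl x M.zero
/-- x ⊕ y = ¬(¬x ⊙ ¬y). -/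
def oplus (M : MVOps α) (x y : α) : α := M.neg (M.odot (M.neg x) (M.neg y))
/-- n-fold ⊕-sum: 0·x = 0, (n+1)·x = n·x ⊕ x. -/
def nsum (M : MVOps α) : ℕ → α → α
  | 0, _ => M.zero
  | n + 1, x => M.oplus (M.nsum n x) x
end MVOps

/-- The MV-algebra axioms. -/
structure IsMVAlgebra {α : Type*} (M : MVOps α) : Prop where
  odot_comm : ∀ x y, M.odot x y = M.odot y x
  odot_assoc : ∀ x y z, M.odot (M.odot x y) z = M.odot x (M.odot y z)
  odot_one : ∀ x, M.odot x M.one = x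
  meet_comm : ∀ x y, M.meet x y = M.meet y x
  meet_assoc : ∀ x y z, M.meet (M.meet x y) z = M.meet x (M.meet y z)
  join_comm : ∀ x y, M.join x y = M.join y x
  join_assoc : ∀ x y z, M.join (M.join x y) z = M.join x (M.join y z)
  absorb_join_meet : ∀ x y, M.join x (M.meet x y) = x
  absorb_meet_join : ∀ x y, M.meet x (M.join x y) = x
  meet_one : ∀ x, M.meet x M.one = x
  join_zero : ∀ x, M.join x M.zero = x
  impl_odot : ∀ x y z, M.impl (M.odot x y) z = M.impl x (M.impl y z)
  ax4 : ∀ x y, M.meet (M.odot (M.impl x y) x) y = M.odot (M.impl x y) x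
  ax5 : ∀ x y, M.impl (M.meet x y) y = M.one
  ax6 : ∀ x y, M.odot x (M.impl x y) = M.meet x y
  ax7 : ∀ x y, M.join (M.impl x y) (M.impl y x) = M.one
  ax8 : ∀ x, M.impl (M.impl x M.zero) M.zero = x

/-- An MV-congruence: an equivalence relation compatible with all MV-operations. -/
def IsMVCong {α : Type*} (M : MVOps α) (r : α → α → Prop) : Prop :=
  Equivalence r ∧
  (∀ a b c d, r a b → r c d → r (M.meet a c) (M.meet b d)) ∧
  (∀ a b c d, r a b → r c d → r (M.join a c) (M.join b d)) ∧
  (∀ a b c d, r a b → r c d → r (M.odot a c) (M.odot b d)) ∧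
  (∀ a b c d, r a b → r c d → r (M.impl a c) (M.impl b d))

/-- Simplicity: nontrivial and the only congruences are the identity and the full one. -/
def IsSimpleMV {α : Type*} (M : MVOps α) : Prop :=
  Nontrivial α ∧ ∀ r : α → α → Prop, IsMVCong M r →
    (∀ x y, r x y ↔ x = y) ∨ (∀ x y, r x y)

/-- An MV-homomorphism. -/
structure IsMVHom {α : Type*} {β : Type*} (M : MVOps α) (N : MVOps β) (f : α → β) : Prop where
  map_zero : f M.zero = N.zero
  map_one : f M.one = N.one
  map_meet : ∀ x y, f (M.meet x y) = N.meet (f x) (f y)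
  map_join : ∀ x y, f (M.join x y) = N.join (f x) (f y)
  map_odot : ∀ x y, f (M.odot x y) = N.odot (f x) (f y)
  map_impl : ∀ x y, f (M.impl x y) = N.impl (f x) (f y)

/-- The standard MV-algebra on [0,1]: x⊙y = max(0, x+y−1), x→y = min(1, 1−x+y). -/
noncomputable def stdMV : MVOps unitInterval where
  meet x y := min x y
  join x y := max x y
  odot x y := ⟨max 0 (x.1 + y.1 - 1),
    le_max_left _ _, max_le zero_le_one (by linarith [x.2.2, y.2.2])⟩
  impl x y := ⟨min 1 (1 - x.1 + y.1),
    le_min zero_le_one (by linarith [x.2.2, y.2.1]), min_le_left _ _⟩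
  zero := 0
  one := 1

/-- A subset of an MV-algebra closed under all MV-operations. -/
structure IsMVSubalg {α : Type*} (M : MVOps α) (S : Set α) : Prop where
  zero_mem : M.zero ∈ S
  one_mem : M.one ∈ S
  meet_mem : ∀ x ∈ S, ∀ y ∈ S, M.meet x y ∈ S
  join_mem : ∀ x ∈ S, ∀ y ∈ S, M.join x y ∈ S
  odot_mem : ∀ x ∈ S, ∀ y ∈ S, M.odot x y ∈ S
  impl_mem : ∀ x ∈ S, ∀ y ∈ S, M.impl x y ∈ S

/-- The MV-operations restricted to a subalgebra. -/
def MVOps.restrict {α : Type*} (M : MVOps α) (S : Set α) (h : IsMVSubalg M S) : MVOps S where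
  meet x y := ⟨M.meet x y, h.meet_mem _ x.2 _ y.2⟩
  join x y := ⟨M.join x y, h.join_mem _ x.2 _ y.2⟩
  odot x y := ⟨M.odot x y, h.odot_mem _ x.2 _ y.2⟩
  impl x y := ⟨M.impl x y, h.impl_mem _ x.2 _ y.2⟩
  zero := ⟨M.zero, h.zero_mem⟩
  one := ⟨M.one, h.one_mem⟩

/-!
A simple MV-algebra is a chain in which every `a ≠ 1` is nilpotent, because the congruence
of the filter generated by `a` cannot be the identity. Over such a chain the pairs `(n, a)`,
`n : ℤ`, `a ≠ 1`, read as `n + a` and added with a carry when `a ⊕ b = 1`, form Chang's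
totally ordered abelian group, and nilpotence makes it archimedean. Hölder's theorem
(`Archimedean.embedReal`) embeds it into `ℝ` sending the unit `1 + 0` to `1`. Composed with
`a ↦ 0 + a`, this is an MV-embedding into `[0,1]` because of Chang's identity
`a + b = (a ⊕ b) + (a ⊙ b)` and because in a chain either `a ⊕ b = 1` or `a ⊙ b = 0`.
-/

def MVOps.le {α : Type*} (M : MVOps α) (x y : α) : Prop := M.meet x y = x

def MVOps.odotPow {α : Type*} (M : MVOps α) (a : α) : ℕ → α
  | 0 => M.one
  | n + 1 => M.odot (M.odotPow a n) a

def MVOps.biimpl {α : Type*} (M : MVOps α) (x y : α) : α := M.odot (M.impl x y) (M.impl y x)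

/-- The congruence of the filter `{x | ∃ n, aⁿ ≤ x}` generated by `a`. -/
def MVOps.filterCong {α : Type*} (M : MVOps α) (a x y : α) : Prop :=
  ∃ n, M.le (M.odotPow a n) (M.biimpl x y)

def MVOps.HasFiniteOrders {α : Type*} (M : MVOps α) : Prop :=
  ∀ b, b ≠ M.zero → ∃ n, M.nsum n b = M.one

structure IsMVChain {α : Type*} (M : MVOps α) : Prop extends IsMVAlgebra M where
  zero_ne_one : M.zero ≠ M.one
  le_total : ∀ x y, M.le x y ∨ M.le y x

section

variable {α : Type*} {M : MVOps α}

local infixl:70 " ⊙ " => MVOps.odot M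
local infixl:65 " ⊕ₘ " => MVOps.oplus M
local infixr:60 " ⇒ " => MVOps.impl M
local infix:50 " ≼ " => MVOps.le M
local prefix:max "∼" => MVOps.neg M

/-! ### Arithmetic of MV-algebras -/

namespace IsMVAlgebra

theorem meet_self (hM : IsMVAlgebra M) (x : α) : M.meet x x = x := by
  simpa only [hM.absorb_join_meet] using hM.absorb_meet_join x (M.meet x x)

theorem le_refl (hM : IsMVAlgebra M) (x : α) : x ≼ x := hM.meet_self x

theorem le_antisymm (hM : IsMVAlgebra M) {x y : α} (hxy : x ≼ y) (hyx : y ≼ x) : x = y := by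
  rw [← hxy, hM.meet_comm]; exact hyx

theorem le_trans (hM : IsMVAlgebra M) {x y z : α} (hxy : x ≼ y) (hyz : y ≼ z) : x ≼ z := by
  unfold MVOps.le at *; rw [← hxy, hM.meet_assoc, hyz]

theorem meet_le_left (hM : IsMVAlgebra M) (x y : α) : M.meet x y ≼ x := by
  unfold MVOps.le; rw [hM.meet_comm, ← hM.meet_assoc, hM.meet_self]

theorem meet_le_right (hM : IsMVAlgebra M) (x y : α) : M.meet x y ≼ y := by
  rw [hM.meet_comm]; exact hM.meet_le_left y x

theorem le_meet (hM : IsMVAlgebra M) {x y z : α} (hx : z ≼ x) (hy : z ≼ y) : z ≼ M.meet x y := by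
  unfold MVOps.le at *; rw [← hM.meet_assoc, hx, hy]

theorem le_iff_join_eq (hM : IsMVAlgebra M) {x y : α} : x ≼ y ↔ M.join x y = y := by
  constructor
  · intro h
    rw [hM.join_comm, ← h, hM.meet_comm, hM.absorb_join_meet]
  · intro h
    rw [MVOps.le, ← h, hM.absorb_meet_join]

theorem le_join_left (hM : IsMVAlgebra M) (x y : α) : x ≼ M.join x y := hM.absorb_meet_join x y

theorem le_join_right (hM : IsMVAlgebra M) (x y : α) : y ≼ M.join x y := by
  rw [hM.join_comm]; exact hM.le_join_left y x

theorem join_le (hM : IsMVAlgebra M) {x y z : α} (hx : x ≼ z) (hy : y ≼ z) : M.join x y ≼ z := by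
  rw [hM.le_iff_join_eq] at *; rw [hM.join_assoc, hy, hx]

theorem le_one (hM : IsMVAlgebra M) (x : α) : x ≼ M.one := hM.meet_one x

theorem zero_le (hM : IsMVAlgebra M) (x : α) : M.zero ≼ x := by
  rw [hM.le_iff_join_eq, hM.join_comm, hM.join_zero]

theorem one_le_iff (hM : IsMVAlgebra M) {x : α} : M.one ≼ x ↔ x = M.one :=
  ⟨hM.le_antisymm (hM.le_one x), fun h => h ▸ hM.le_refl x⟩

theorem le_zero_iff (hM : IsMVAlgebra M) {x : α} : x ≼ M.zero ↔ x = M.zero :=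
  ⟨(hM.le_antisymm · (hM.zero_le x)), fun h => h ▸ hM.le_refl x⟩

theorem one_odot (hM : IsMVAlgebra M) (x : α) : M.one ⊙ x = x := by
  rw [hM.odot_comm, hM.odot_one]

theorem impl_eq_one_iff (hM : IsMVAlgebra M) {x y : α} : x ⇒ y = M.one ↔ x ≼ y := by
  refine ⟨fun h => ?_, fun h => ?_⟩
  · rw [MVOps.le, ← hM.ax6, h, hM.odot_one]
  · rw [← hM.ax5 x y, h]

theorem impl_self (hM : IsMVAlgebra M) (x : α) : x ⇒ x = M.one :=
  hM.impl_eq_one_iff.mpr (hM.le_refl x)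

theorem odot_le_iff_le_impl (hM : IsMVAlgebra M) {x y z : α} : x ⊙ y ≼ z ↔ x ≼ y ⇒ z := by
  rw [← hM.impl_eq_one_iff, ← hM.impl_eq_one_iff, hM.impl_odot]

theorem one_impl (hM : IsMVAlgebra M) (x : α) : M.one ⇒ x = x := by
  rw [← hM.one_odot (M.one ⇒ x), hM.ax6, hM.meet_comm, hM.meet_one]

theorem impl_one (hM : IsMVAlgebra M) (x : α) : x ⇒ M.one = M.one :=
  hM.impl_eq_one_iff.mpr (hM.le_one x)

theorem odot_le_left (hM : IsMVAlgebra M) (x y : α) : x ⊙ y ≼ x := by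
  rw [hM.odot_comm, hM.odot_le_iff_le_impl, hM.impl_self]; exact hM.le_one y

theorem odot_le_right (hM : IsMVAlgebra M) (x y : α) : x ⊙ y ≼ y := by
  rw [hM.odot_comm]; exact hM.odot_le_left y x

theorem odot_le_odot_left (hM : IsMVAlgebra M) (x : α) {y z : α} (h : y ≼ z) :
    x ⊙ y ≼ x ⊙ z := by
  rw [hM.odot_comm x y, hM.odot_le_iff_le_impl]
  refine hM.le_trans h ?_
  rw [← hM.odot_le_iff_le_impl, hM.odot_comm]
  exact hM.le_refl _

theorem odot_le_odot (hM : IsMVAlgebra M) {a b c d : α} (hab : a ≼ b) (hcd : c ≼ d) :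
    a ⊙ c ≼ b ⊙ d := by
  refine hM.le_trans (hM.odot_le_odot_left a hcd) ?_
  rw [hM.odot_comm a d, hM.odot_comm b d]
  exact hM.odot_le_odot_left d hab

theorem odot_zero (hM : IsMVAlgebra M) (x : α) : x ⊙ M.zero = M.zero :=
  hM.le_zero_iff.mp (hM.odot_le_right x _)

theorem neg_neg (hM : IsMVAlgebra M) (x : α) : ∼∼x = x := hM.ax8 x

theorem neg_one (hM : IsMVAlgebra M) : ∼M.one = M.zero := hM.one_impl M.zero

theorem neg_zero (hM : IsMVAlgebra M) : ∼M.zero = M.one := hM.impl_self M.zero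

theorem odot_neg_self (hM : IsMVAlgebra M) (x : α) : x ⊙ ∼x = M.zero := by
  rw [MVOps.neg, hM.ax6, ← hM.le_zero_iff]; exact hM.meet_le_right x _

theorem neg_le_neg (hM : IsMVAlgebra M) {x y : α} (h : x ≼ y) : ∼y ≼ ∼x := by
  show y ⇒ M.zero ≼ x ⇒ M.zero
  rw [← hM.odot_le_iff_le_impl]
  refine hM.le_trans (hM.odot_le_odot_left _ h) ?_
  exact hM.ax4 y M.zero

theorem le_neg_comm (hM : IsMVAlgebra M) {x y : α} : x ≼ ∼y ↔ y ≼ ∼x := by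
  constructor <;> intro h <;> simpa only [hM.neg_neg] using hM.neg_le_neg h

theorem neg_odot_neg (hM : IsMVAlgebra M) (x y : α) : ∼(x ⊙ ∼y) = x ⇒ y := by
  rw [MVOps.neg, hM.impl_odot]; exact congrArg (M.impl x) (hM.neg_neg y)

theorem neg_oplus (hM : IsMVAlgebra M) (x y : α) : ∼(x ⊕ₘ y) = ∼x ⊙ ∼y := hM.neg_neg _

theorem neg_odot (hM : IsMVAlgebra M) (x y : α) : ∼(x ⊙ y) = ∼x ⊕ₘ ∼y := by
  rw [MVOps.oplus, hM.neg_neg, hM.neg_neg]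

theorem oplus_eq_neg_impl (hM : IsMVAlgebra M) (x y : α) : x ⊕ₘ y = ∼x ⇒ y := by
  rw [← hM.neg_odot_neg]; rfl

theorem oplus_comm (hM : IsMVAlgebra M) (x y : α) : x ⊕ₘ y = y ⊕ₘ x := by
  rw [MVOps.oplus, hM.odot_comm]; rfl

theorem oplus_assoc (hM : IsMVAlgebra M) (x y z : α) : x ⊕ₘ y ⊕ₘ z = x ⊕ₘ (y ⊕ₘ z) := by
  simp only [MVOps.oplus, hM.neg_neg, hM.odot_assoc]

theorem oplus_zero (hM : IsMVAlgebra M) (x : α) : x ⊕ₘ M.zero = x := by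
  rw [MVOps.oplus, hM.neg_zero, hM.odot_one, hM.neg_neg]

theorem oplus_one (hM : IsMVAlgebra M) (x : α) : x ⊕ₘ M.one = M.one := by
  rw [MVOps.oplus, hM.neg_one, hM.odot_zero, hM.neg_zero]

theorem oplus_le_oplus (hM : IsMVAlgebra M) {a b c d : α} (hab : a ≼ b) (hcd : c ≼ d) :
    a ⊕ₘ c ≼ b ⊕ₘ d :=
  hM.neg_le_neg (hM.odot_le_odot (hM.neg_le_neg hab) (hM.neg_le_neg hcd))

theorem le_oplus_left (hM : IsMVAlgebra M) (x y : α) : x ≼ x ⊕ₘ y := by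
  simpa only [hM.oplus_zero] using hM.oplus_le_oplus (hM.le_refl x) (hM.zero_le y)

theorem le_oplus_right (hM : IsMVAlgebra M) (x y : α) : y ≼ x ⊕ₘ y := by
  rw [hM.oplus_comm]; exact hM.le_oplus_left y x

theorem oplus_neg_self (hM : IsMVAlgebra M) (x : α) : x ⊕ₘ ∼x = M.one := by
  rw [hM.oplus_eq_neg_impl, hM.impl_self]

theorem odot_eq_zero_iff (hM : IsMVAlgebra M) {x y : α} : x ⊙ y = M.zero ↔ x ≼ ∼y := by
  rw [← hM.le_zero_iff, hM.odot_le_iff_le_impl]; rfl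

theorem oplus_eq_one_iff (hM : IsMVAlgebra M) {x y : α} : x ⊕ₘ y = M.one ↔ ∼x ≼ y := by
  rw [hM.oplus_eq_neg_impl, hM.impl_eq_one_iff]

theorem oplus_odot_neg_cancel (hM : IsMVAlgebra M) {x y : α} (h : x ≼ ∼y) :
    (x ⊕ₘ y) ⊙ ∼y = x := by
  rw [hM.oplus_comm, hM.oplus_eq_neg_impl, hM.odot_comm, hM.ax6, hM.meet_comm]; exact h

theorem odot_neg_oplus_cancel (hM : IsMVAlgebra M) {x y : α} (h : y ≼ x) :
    x ⊙ ∼y ⊕ₘ y = x := by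
  have h' : ∼x ≼ ∼y := hM.neg_le_neg h
  show ∼(∼(x ⊙ ∼y) ⊙ ∼y) = x
  rw [hM.neg_odot x, hM.neg_neg y, hM.oplus_odot_neg_cancel h', hM.neg_neg]

theorem oplus_right_cancel (hM : IsMVAlgebra M) {u v w : α} (h : u ⊕ₘ w = v ⊕ₘ w)
    (hu : u ≼ ∼w) (hv : v ≼ ∼w) : u = v := by
  rw [← hM.oplus_odot_neg_cancel hu, h, hM.oplus_odot_neg_cancel hv]

theorem odot_odot_odot_comm (hM : IsMVAlgebra M) (a b c d : α) :
    a ⊙ b ⊙ (c ⊙ d) = a ⊙ c ⊙ (b ⊙ d) := by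
  rw [hM.odot_assoc, hM.odot_assoc, ← hM.odot_assoc b, hM.odot_comm b c, hM.odot_assoc c]

theorem odot_join (hM : IsMVAlgebra M) (t x y : α) :
    t ⊙ M.join x y = M.join (t ⊙ x) (t ⊙ y) := by
  apply hM.le_antisymm
  · rw [hM.odot_comm, hM.odot_le_iff_le_impl]
    apply hM.join_le <;> rw [← hM.odot_le_iff_le_impl, hM.odot_comm]
    exacts [hM.le_join_left _ _, hM.le_join_right _ _]
  · exact hM.join_le (hM.odot_le_odot_left t (hM.le_join_left x y))
      (hM.odot_le_odot_left t (hM.le_join_right x y))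

theorem impl_odot_impl_le (hM : IsMVAlgebra M) (x y z : α) : (x ⇒ y) ⊙ (y ⇒ z) ≼ x ⇒ z := by
  rw [← hM.odot_le_iff_le_impl, hM.odot_comm (x ⇒ y), hM.odot_assoc]
  exact hM.le_trans (hM.odot_le_odot_left _ (hM.ax4 x y)) (hM.ax4 y z)

theorem impl_odot_impl_le_meet (hM : IsMVAlgebra M) (x y u v : α) :
    (x ⇒ y) ⊙ (u ⇒ v) ≼ M.meet x u ⇒ M.meet y v := by
  rw [← hM.odot_le_iff_le_impl]
  apply hM.le_meet
  · exact hM.le_trans (hM.odot_le_odot (hM.odot_le_left _ _) (hM.meet_le_left x u)) (hM.ax4 x y)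
  · exact hM.le_trans (hM.odot_le_odot (hM.odot_le_right _ _) (hM.meet_le_right x u)) (hM.ax4 u v)

theorem impl_odot_impl_le_join (hM : IsMVAlgebra M) (x y u v : α) :
    (x ⇒ y) ⊙ (u ⇒ v) ≼ M.join x u ⇒ M.join y v := by
  rw [← hM.odot_le_iff_le_impl, hM.odot_join]
  apply hM.join_le
  · exact hM.le_trans (hM.le_trans (hM.odot_le_odot (hM.odot_le_left _ _) (hM.le_refl x))
      (hM.ax4 x y)) (hM.le_join_left y v)
  · exact hM.le_trans (hM.le_trans (hM.odot_le_odot (hM.odot_le_right _ _) (hM.le_refl u))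
      (hM.ax4 u v)) (hM.le_join_right y v)

theorem impl_odot_impl_le_odot (hM : IsMVAlgebra M) (x y u v : α) :
    (x ⇒ y) ⊙ (u ⇒ v) ≼ x ⊙ u ⇒ y ⊙ v := by
  rw [← hM.odot_le_iff_le_impl, hM.odot_odot_odot_comm]
  exact hM.odot_le_odot (hM.ax4 x y) (hM.ax4 u v)

theorem impl_odot_impl_le_impl (hM : IsMVAlgebra M) (x y u v : α) :
    (y ⇒ x) ⊙ (u ⇒ v) ≼ (x ⇒ u) ⇒ y ⇒ v := by
  rw [← hM.odot_le_iff_le_impl, ← hM.odot_le_iff_le_impl]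
  have : Std.Associative M.odot := ⟨hM.odot_assoc⟩
  have : Std.Commutative M.odot := ⟨hM.odot_comm⟩
  rw [show (y ⇒ x) ⊙ (u ⇒ v) ⊙ (x ⇒ u) ⊙ y = (u ⇒ v) ⊙ ((x ⇒ u) ⊙ ((y ⇒ x) ⊙ y)) by ac_rfl]
  refine hM.le_trans (hM.odot_le_odot_left _ ?_) (hM.ax4 u v)
  exact hM.le_trans (hM.odot_le_odot_left _ (hM.ax4 y x)) (hM.ax4 x u)

theorem biimpl_odot_biimpl_le_of (hM : IsMVAlgebra M) {op : α → α → α}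
    (hop : ∀ x y u v, (x ⇒ y) ⊙ (u ⇒ v) ≼ op x u ⇒ op y v) (x y u v : α) :
    M.biimpl x y ⊙ M.biimpl u v ≼ M.biimpl (op x u) (op y v) := by
  rw [MVOps.biimpl, MVOps.biimpl, hM.odot_odot_odot_comm]
  exact hM.odot_le_odot (hop x y u v) (hop y x v u)

theorem biimpl_odot_biimpl_le_impl (hM : IsMVAlgebra M) (x y u v : α) :
    M.biimpl x y ⊙ M.biimpl u v ≼ M.biimpl (x ⇒ u) (y ⇒ v) := by
  rw [MVOps.biimpl, MVOps.biimpl, hM.odot_comm (x ⇒ y), hM.odot_odot_odot_comm]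
  exact hM.odot_le_odot (hM.impl_odot_impl_le_impl x y u v) (hM.impl_odot_impl_le_impl y x v u)

theorem biimpl_odot_biimpl_le_biimpl (hM : IsMVAlgebra M) (x y z : α) :
    M.biimpl x y ⊙ M.biimpl y z ≼ M.biimpl x z := by
  rw [MVOps.biimpl, MVOps.biimpl, hM.odot_odot_odot_comm, hM.odot_comm (y ⇒ x)]
  exact hM.odot_le_odot (hM.impl_odot_impl_le x y z) (hM.impl_odot_impl_le z y x)

theorem odotPow_add (hM : IsMVAlgebra M) (a : α) (m n : ℕ) :
    M.odotPow a (m + n) = M.odotPow a m ⊙ M.odotPow a n := by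
  induction n with
  | zero => exact (hM.odot_one _).symm
  | succ n ih => rw [← Nat.add_assoc, MVOps.odotPow, ih, hM.odot_assoc]; rfl

theorem filterCong_compat (hM : IsMVAlgebra M) {op : α → α → α} {a : α}
    (hop : ∀ x y u v, M.biimpl x y ⊙ M.biimpl u v ≼ M.biimpl (op x u) (op y v))
    {x y u v : α} : M.filterCong a x y → M.filterCong a u v →
      M.filterCong a (op x u) (op y v) := by
  rintro ⟨m, hm⟩ ⟨n, hn⟩
  refine ⟨m + n, ?_⟩
  rw [hM.odotPow_add]
  exact hM.le_trans (hM.odot_le_odot hm hn) (hop x y u v)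

theorem isMVCong_filterCong (hM : IsMVAlgebra M) (a : α) : IsMVCong M (M.filterCong a) := by
  refine ⟨⟨fun x => ⟨0, ?_⟩, fun {x y} => ?_, fun {x y z} => ?_⟩, ?_, ?_, ?_, ?_⟩
  · rw [MVOps.biimpl, hM.impl_self, hM.odot_one]; exact hM.le_refl _
  · rw [MVOps.filterCong, MVOps.filterCong, MVOps.biimpl, MVOps.biimpl, hM.odot_comm (x ⇒ y)]
    exact id
  · rintro ⟨m, hm⟩ ⟨n, hn⟩
    refine ⟨m + n, ?_⟩
    rw [hM.odotPow_add]
    exact hM.le_trans (hM.odot_le_odot hm hn) (hM.biimpl_odot_biimpl_le_biimpl x y z)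
  · exact fun _ _ _ _ =>
      hM.filterCong_compat (hM.biimpl_odot_biimpl_le_of hM.impl_odot_impl_le_meet)
  · exact fun _ _ _ _ =>
      hM.filterCong_compat (hM.biimpl_odot_biimpl_le_of hM.impl_odot_impl_le_join)
  · exact fun _ _ _ _ =>
      hM.filterCong_compat (hM.biimpl_odot_biimpl_le_of hM.impl_odot_impl_le_odot)
  · exact fun _ _ _ _ => hM.filterCong_compat hM.biimpl_odot_biimpl_le_impl

theorem join_odotPow_eq_one (hM : IsMVAlgebra M) {x y : α} (h : M.join x y = M.one) (n : ℕ) :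
    M.join (M.odotPow x n) y = M.one := by
  induction n with
  | zero => rw [← hM.one_le_iff]; exact hM.le_join_left _ _
  | succ n ih =>
    rw [← hM.one_le_iff, ← hM.odot_one M.one]
    nth_rw 1 [← ih, ← h]
    rw [hM.odot_join, hM.odot_comm _ x, hM.odot_join x]
    have hy (z : α) : z ⊙ y ≼ M.join (M.odotPow x (n + 1)) y :=
      hM.le_trans (hM.odot_le_right z y) (hM.le_join_right _ _)
    refine hM.join_le (hM.join_le ?_ (hy x)) (hy _)
    rw [hM.odot_comm]; exact hM.le_join_left _ _

theorem neg_nsum (hM : IsMVAlgebra M) (b : α) (n : ℕ) : ∼(M.nsum n b) = M.odotPow (∼b) n := by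
  induction n with
  | zero => exact hM.neg_zero
  | succ n ih => rw [MVOps.nsum, hM.neg_oplus, ih]; rfl

theorem odot_ne_one (hM : IsMVAlgebra M) {a : α} (ha : a ≠ M.one) (b : α) : a ⊙ b ≠ M.one :=
  fun h => ha (hM.one_le_iff.mp (h ▸ hM.odot_le_left a b))

theorem neg_ne_one (hM : IsMVAlgebra M) {a : α} (ha : a ≠ M.zero) : ∼a ≠ M.one :=
  fun h => ha (by rw [← hM.neg_neg a, h, hM.neg_one])

theorem odot_oplus_neg_cancel (hM : IsMVAlgebra M) {x y : α} (h : ∼x ≼ y) : x ⊙ y ⊕ₘ ∼x = y := by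
  simpa only [hM.neg_neg, hM.odot_comm y] using hM.odot_neg_oplus_cancel h

theorem oplus_neg_oplus (hM : IsMVAlgebra M) {x y : α} (h : x ≼ ∼y) : x ⊕ₘ ∼(x ⊕ₘ y) = ∼y := by
  have h' : ∼∼x ≼ ∼y := by rwa [hM.neg_neg]
  rw [hM.neg_oplus, hM.oplus_comm]
  simpa only [hM.neg_neg] using hM.odot_oplus_neg_cancel h'

theorem oplus_le_neg_of_oplus_le_neg (hM : IsMVAlgebra M) {a b c : α} (hab : a ≼ ∼b)
    (h : a ⊕ₘ b ≼ ∼c) : b ⊕ₘ c ≼ ∼a := by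
  rw [← hM.oplus_neg_oplus (hM.le_neg_comm.mp hab), hM.oplus_comm b a]
  exact hM.oplus_le_oplus (hM.le_refl b) (hM.le_neg_comm.mp h)

theorem oplus_odot_assoc (hM : IsMVAlgebra M) {a b c : α} (hab : a ≼ ∼b) (hbc : ∼b ≼ c) :
    (a ⊕ₘ b) ⊙ c = a ⊕ₘ b ⊙ c := by
  have hcb : ∼c ≼ b := by simpa only [hM.neg_neg] using hM.neg_le_neg hbc
  have hL : (a ⊕ₘ b) ⊙ c ⊕ₘ ∼c = a ⊕ₘ b := by
    simpa only [hM.neg_neg] using hM.odot_neg_oplus_cancel (hM.le_trans hcb (hM.le_oplus_right a b))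
  have hR : b ⊙ c ⊕ₘ ∼c = b := by simpa only [hM.neg_neg] using hM.odot_neg_oplus_cancel hcb
  refine hM.oplus_right_cancel (w := ∼c) ?_ ?_ ?_
  · rw [hL, hM.oplus_assoc, hR]
  · rw [hM.neg_neg]; exact hM.odot_le_right _ _
  · rw [hM.neg_neg]
    refine hM.le_trans (hM.oplus_le_oplus hab (hM.le_refl _)) ?_
    rw [hM.oplus_comm, hM.odot_oplus_neg_cancel hbc]
    exact hM.le_refl c

end IsMVAlgebra

/-! ### Simple MV-algebras are chains whose nonzero elements have finite order -/

namespace IsSimpleMV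

theorem zero_ne_one (hM : IsMVAlgebra M) (hS : IsSimpleMV M) : M.zero ≠ M.one := by
  intro h
  obtain ⟨x, y, hxy⟩ := hS.1
  have h_eq_zero (z : α) : z = M.zero := by rw [← hM.odot_one z, ← h, hM.odot_zero]
  exact hxy ((h_eq_zero x).trans (h_eq_zero y).symm)

/-- Modulo its own filter `a` is congruent to `1`, so by simplicity that congruence is total
and relates `1` to `0`. -/
theorem exists_odotPow_eq_zero (hM : IsMVAlgebra M) (hS : IsSimpleMV M) {a : α}
    (ha : a ≠ M.one) : ∃ n, M.odotPow a n = M.zero := by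
  rcases hS.2 _ (hM.isMVCong_filterCong a) with hid | hall
  · refine absurd ((hid a M.one).mp ⟨1, ?_⟩) ha
    rw [MVOps.biimpl, hM.impl_one, hM.one_impl]
    exact hM.le_refl _
  · obtain ⟨n, hn⟩ := hall M.one M.zero
    rw [MVOps.biimpl, hM.one_impl, hM.impl_eq_one_iff.mpr (hM.zero_le _), hM.odot_one] at hn
    exact ⟨n, hM.le_zero_iff.mp hn⟩

theorem le_total (hM : IsMVAlgebra M) (hS : IsSimpleMV M) (x y : α) : x ≼ y ∨ y ≼ x := by
  by_cases hxy : x ⇒ y = M.one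
  · exact Or.inl (hM.impl_eq_one_iff.mp hxy)
  · obtain ⟨n, hn⟩ := hS.exists_odotPow_eq_zero hM hxy
    have h := hM.join_odotPow_eq_one (hM.ax7 x y) n
    rw [hn, hM.join_comm, hM.join_zero] at h
    exact Or.inr (hM.impl_eq_one_iff.mp h)

theorem isMVChain (hM : IsMVAlgebra M) (hS : IsSimpleMV M) : IsMVChain M :=
  { hM with zero_ne_one := hS.zero_ne_one hM, le_total := hS.le_total hM }

theorem hasFiniteOrders (hM : IsMVAlgebra M) (hS : IsSimpleMV M) : M.HasFiniteOrders := by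
  intro b hb
  obtain ⟨n, hn⟩ := hS.exists_odotPow_eq_zero hM (hM.neg_ne_one hb)
  refine ⟨n, ?_⟩
  rw [← hM.neg_nsum, ← hM.neg_one] at hn
  rw [← hM.neg_neg (M.nsum n b), hn, hM.neg_neg]

end IsSimpleMV

/-! ### Chang's group of an MV-chain -/

namespace IsMVChain

theorem le_neg_of_oplus_ne_one (hC : IsMVChain M) {x y : α} (h : x ⊕ₘ y ≠ M.one) : x ≼ ∼y :=
  (hC.le_total (∼x) y).elim (fun h' => absurd (hC.oplus_eq_one_iff.mpr h') h) hC.le_neg_comm.mp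

theorem oplus_odot_eq_odot_oplus (hC : IsMVChain M) {a b c : α} (hab : a ≼ ∼b) (hcb : c ≼ ∼b) :
    (a ⊕ₘ b) ⊙ c = a ⊙ (b ⊕ₘ c) := by
  have hba := hC.le_neg_comm.mp hab
  have hbc := hC.le_neg_comm.mp hcb
  rcases hC.le_total (a ⊕ₘ b) (∼c) with h | h
  · rw [hC.odot_eq_zero_iff.mpr h, eq_comm, hC.odot_eq_zero_iff, hC.le_neg_comm]
    exact hC.oplus_le_neg_of_oplus_le_neg hab h
  rcases hC.le_total (c ⊕ₘ b) (∼a) with h' | h'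
  · rw [hC.odot_comm a, hC.oplus_comm b, hC.odot_eq_zero_iff.mpr h', hC.odot_eq_zero_iff,
      hC.oplus_comm]
    exact hC.oplus_le_neg_of_oplus_le_neg hcb h'
  rw [hC.oplus_comm c] at h'
  have hL : (a ⊕ₘ b) ⊙ c ⊕ₘ ∼c = a ⊕ₘ b := by
    simpa only [hC.neg_neg] using hC.odot_neg_oplus_cancel h
  have hR : a ⊙ (b ⊕ₘ c) ⊕ₘ ∼c = a ⊕ₘ b := by
    have ha : a ⊙ (b ⊕ₘ c) ⊕ₘ ∼(b ⊕ₘ c) = a := by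
      simpa only [hC.neg_neg] using hC.odot_neg_oplus_cancel (hC.neg_le_neg h')
    rw [← hC.oplus_neg_oplus hbc, hC.oplus_comm b (∼(b ⊕ₘ c)), ← hC.oplus_assoc, ha]
  refine hC.oplus_right_cancel (w := ∼c) (hL.trans hR.symm) ?_ ?_
  · rw [hC.neg_neg]; exact hC.odot_le_right _ _
  · rw [hC.neg_neg]
    refine hC.le_trans (hC.odot_le_odot hab (hC.le_refl _)) ?_
    rw [hC.odot_comm, hC.oplus_comm, hC.oplus_odot_neg_cancel hcb]
    exact hC.le_refl c

theorem odot_oplus_eq_oplus_odot (hC : IsMVChain M) {a b c : α} (hba : ∼b ≼ a) (hbc : ∼b ≼ c) :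
    a ⊙ b ⊕ₘ c = a ⊕ₘ b ⊙ c := by
  have h := congrArg M.neg (hC.oplus_odot_eq_odot_oplus (a := ∼a) (b := ∼b) (c := ∼c)
    (hC.neg_le_neg hba) (hC.neg_le_neg hbc))
  simpa only [hC.neg_odot, hC.neg_oplus, hC.neg_neg] using h

theorem oplus_eq_one_or_odot_eq_zero (hC : IsMVChain M) (x y : α) :
    x ⊕ₘ y = M.one ∨ x ⊙ y = M.zero := by
  by_cases h : x ⊕ₘ y = M.one
  · exact Or.inl h
  · exact Or.inr (hC.odot_eq_zero_iff.mpr (hC.le_neg_of_oplus_ne_one h))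

end IsMVChain

/-- `⟨n, a, _⟩` stands for `n + a`, where `0 ≤ a < 1`. -/
structure ChangGroup (hC : IsMVChain M) where
  intPart : ℤ
  fracPart : α
  fracPart_ne_one : fracPart ≠ M.one

namespace ChangGroup

variable {hC : IsMVChain M}

theorem mk_eq_mk {m n : ℤ} {a b : α} {ha : a ≠ M.one} {hb : b ≠ M.one} :
    (⟨m, a, ha⟩ : ChangGroup hC) = ⟨n, b, hb⟩ ↔ m = n ∧ a = b := by
  simp only [mk.injEq]

instance : Zero (ChangGroup hC) := ⟨⟨0, M.zero, hC.zero_ne_one⟩⟩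

instance : One (ChangGroup hC) := ⟨⟨1, M.zero, hC.zero_ne_one⟩⟩

open scoped Classical in
noncomputable instance : Add (ChangGroup hC) where
  add x y :=
    if h : x.fracPart ⊕ₘ y.fracPart = M.one then
      ⟨x.intPart + y.intPart + 1, x.fracPart ⊙ y.fracPart, hC.odot_ne_one x.fracPart_ne_one _⟩
    else ⟨x.intPart + y.intPart, x.fracPart ⊕ₘ y.fracPart, h⟩

open scoped Classical in
noncomputable instance : Neg (ChangGroup hC) where
  neg x :=
    if h : x.fracPart = M.zero then ⟨-x.intPart, M.zero, hC.zero_ne_one⟩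
    else ⟨-x.intPart - 1, ∼x.fracPart, hC.neg_ne_one h⟩

theorem zero_def : (0 : ChangGroup hC) = ⟨0, M.zero, hC.zero_ne_one⟩ := rfl

theorem one_def : (1 : ChangGroup hC) = ⟨1, M.zero, hC.zero_ne_one⟩ := rfl

theorem mk_add_mk_of_oplus_eq_one {m n : ℤ} {a b : α} {ha : a ≠ M.one} {hb : b ≠ M.one}
    (h : a ⊕ₘ b = M.one) :
    (⟨m, a, ha⟩ + ⟨n, b, hb⟩ : ChangGroup hC) = ⟨m + n + 1, a ⊙ b, hC.odot_ne_one ha b⟩ :=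
  dif_pos h

theorem mk_add_mk_of_oplus_ne_one {m n : ℤ} {a b : α} {ha : a ≠ M.one} {hb : b ≠ M.one}
    (h : a ⊕ₘ b ≠ M.one) :
    (⟨m, a, ha⟩ + ⟨n, b, hb⟩ : ChangGroup hC) = ⟨m + n, a ⊕ₘ b, h⟩ :=
  dif_neg h

theorem intPart_add_le (x y : ChangGroup hC) : x.intPart + y.intPart ≤ (x + y).intPart := by
  obtain ⟨m, a, ha⟩ := x
  obtain ⟨n, b, hb⟩ := y
  by_cases h : a ⊕ₘ b = M.one
  · rw [mk_add_mk_of_oplus_eq_one h]; exact Int.le_add_one le_rfl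
  · rw [mk_add_mk_of_oplus_ne_one h]

theorem neg_of_fracPart_eq_zero {x : ChangGroup hC} (h : x.fracPart = M.zero) :
    -x = ⟨-x.intPart, M.zero, hC.zero_ne_one⟩ :=
  dif_pos h

theorem neg_of_fracPart_ne_zero {x : ChangGroup hC} (h : x.fracPart ≠ M.zero) :
    -x = ⟨-x.intPart - 1, ∼x.fracPart, hC.neg_ne_one h⟩ :=
  dif_neg h

theorem intPart_neg_le (x : ChangGroup hC) : -x.intPart - 1 ≤ (-x).intPart := by
  by_cases h : x.fracPart = M.zero
  · rw [neg_of_fracPart_eq_zero h]; exact Int.sub_le_self _ zero_le_one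
  · rw [neg_of_fracPart_ne_zero h]

protected theorem add_comm (x y : ChangGroup hC) : x + y = y + x := by
  obtain ⟨m, a, ha⟩ := x
  obtain ⟨n, b, hb⟩ := y
  by_cases h : a ⊕ₘ b = M.one
  · rw [mk_add_mk_of_oplus_eq_one h, mk_add_mk_of_oplus_eq_one (hC.oplus_comm a b ▸ h), mk_eq_mk]
    exact ⟨by ring, hC.odot_comm a b⟩
  · rw [mk_add_mk_of_oplus_ne_one h, mk_add_mk_of_oplus_ne_one (hC.oplus_comm a b ▸ h), mk_eq_mk]
    exact ⟨by ring, hC.oplus_comm a b⟩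

protected theorem add_zero (x : ChangGroup hC) : x + 0 = x := by
  obtain ⟨m, a, ha⟩ := x
  rw [zero_def, mk_add_mk_of_oplus_ne_one (by rwa [hC.oplus_zero]), mk_eq_mk]
  exact ⟨by ring, hC.oplus_zero a⟩

protected theorem neg_add_cancel (x : ChangGroup hC) : -x + x = 0 := by
  obtain ⟨m, a, ha⟩ := x
  by_cases h : a = M.zero
  · subst h
    rw [neg_of_fracPart_eq_zero rfl, mk_add_mk_of_oplus_ne_one (by rwa [hC.oplus_zero]), zero_def,
      mk_eq_mk]
    exact ⟨by ring, hC.oplus_zero _⟩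
  · have hcarry : ∼a ⊕ₘ a = M.one := by rw [hC.oplus_comm, hC.oplus_neg_self]
    rw [neg_of_fracPart_ne_zero h, mk_add_mk_of_oplus_eq_one hcarry, zero_def, mk_eq_mk]
    exact ⟨by ring, by rw [hC.odot_comm, hC.odot_neg_self]⟩

/-- Associativity outside the configuration "carry in `x + y`, none in `y + z`"; that case
follows by commutativity from the mirror configuration `(z, y, x)`. -/
theorem add_assoc_of_not_carry_left {x y z : ChangGroup hC}
    (h : ¬(x.fracPart ⊕ₘ y.fracPart = M.one ∧ y.fracPart ⊕ₘ z.fracPart ≠ M.one)) :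
    x + y + z = x + (y + z) := by
  obtain ⟨m, a, ha⟩ := x
  obtain ⟨n, b, hb⟩ := y
  obtain ⟨p, c, hc⟩ := z
  dsimp only at h
  by_cases hab : a ⊕ₘ b = M.one <;> by_cases hbc : b ⊕ₘ c = M.one
  · rw [mk_add_mk_of_oplus_eq_one hab, mk_add_mk_of_oplus_eq_one hbc]
    have hD : a ⊙ b ⊕ₘ c = a ⊕ₘ b ⊙ c := hC.odot_oplus_eq_oplus_odot
      (hC.oplus_eq_one_iff.mp (hC.oplus_comm a b ▸ hab)) (hC.oplus_eq_one_iff.mp hbc)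
    by_cases habc : a ⊙ b ⊕ₘ c = M.one
    · rw [mk_add_mk_of_oplus_eq_one habc, mk_add_mk_of_oplus_eq_one (hD ▸ habc), mk_eq_mk]
      exact ⟨by ring, hC.odot_assoc a b c⟩
    · rw [mk_add_mk_of_oplus_ne_one habc, mk_add_mk_of_oplus_ne_one (hD ▸ habc), mk_eq_mk]
      exact ⟨by ring, hD⟩
  · exact absurd ⟨hab, hbc⟩ h
  · have habc : a ⊕ₘ b ⊕ₘ c = M.one := by rw [hC.oplus_assoc, hbc, hC.oplus_one]
    have habc' : a ⊕ₘ b ⊙ c ≠ M.one := fun h' => hab <| hC.one_le_iff.mp <|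
      h' ▸ hC.oplus_le_oplus (hC.le_refl a) (hC.odot_le_left b c)
    rw [mk_add_mk_of_oplus_ne_one hab, mk_add_mk_of_oplus_eq_one hbc,
      mk_add_mk_of_oplus_eq_one habc, mk_add_mk_of_oplus_ne_one habc', mk_eq_mk]
    exact ⟨by ring,
      hC.oplus_odot_assoc (hC.le_neg_of_oplus_ne_one hab) (hC.oplus_eq_one_iff.mp hbc)⟩
  · rw [mk_add_mk_of_oplus_ne_one hab, mk_add_mk_of_oplus_ne_one hbc]
    by_cases habc : a ⊕ₘ b ⊕ₘ c = M.one
    · rw [mk_add_mk_of_oplus_eq_one habc,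
        mk_add_mk_of_oplus_eq_one (hC.oplus_assoc a b c ▸ habc), mk_eq_mk]
      refine ⟨by ring, hC.oplus_odot_eq_odot_oplus (hC.le_neg_of_oplus_ne_one hab) ?_⟩
      exact hC.le_neg_of_oplus_ne_one (hC.oplus_comm b c ▸ hbc)
    · rw [mk_add_mk_of_oplus_ne_one habc,
        mk_add_mk_of_oplus_ne_one (hC.oplus_assoc a b c ▸ habc), mk_eq_mk]
      exact ⟨by ring, hC.oplus_assoc a b c⟩

protected theorem add_assoc (x y z : ChangGroup hC) : x + y + z = x + (y + z) := by
  by_cases h : x.fracPart ⊕ₘ y.fracPart = M.one ∧ y.fracPart ⊕ₘ z.fracPart ≠ M.one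
  · have h' : ¬(z.fracPart ⊕ₘ y.fracPart = M.one ∧ y.fracPart ⊕ₘ x.fracPart ≠ M.one) :=
      fun h' => h.2 (hC.oplus_comm z.fracPart _ ▸ h'.1)
    rw [ChangGroup.add_comm, ChangGroup.add_comm x, ← add_assoc_of_not_carry_left h',
      ChangGroup.add_comm, ChangGroup.add_comm z]
  · exact add_assoc_of_not_carry_left h

noncomputable instance : AddCommGroup (ChangGroup hC) where
  add_assoc := ChangGroup.add_assoc
  zero_add x := by rw [ChangGroup.add_comm, ChangGroup.add_zero]
  add_zero := ChangGroup.add_zero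
  add_comm := ChangGroup.add_comm
  neg_add_cancel := ChangGroup.neg_add_cancel
  nsmul := nsmulRec
  zsmul := zsmulRec

-- Giving the order by its positive cone makes translation invariance automatic.
def nonnegCone (hC : IsMVChain M) : AddGroupCone (ChangGroup hC) where
  carrier := {x | 0 ≤ x.intPart}
  add_mem' {x y} hx hy := (add_nonneg hx hy).trans (intPart_add_le x y)
  zero_mem' := le_refl (0 : ℤ)
  eq_zero_of_mem_of_neg_mem' {x} hx hnx := by
    change 0 ≤ x.intPart at hx
    change 0 ≤ (-x).intPart at hnx
    obtain ⟨m, a, ha⟩ := x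
    by_cases h : a = M.zero
    · subst h
      rw [neg_of_fracPart_eq_zero rfl] at hnx
      rw [zero_def, mk_eq_mk]
      exact ⟨by dsimp only at hx hnx; omega, rfl⟩
    · rw [neg_of_fracPart_ne_zero h] at hnx
      dsimp only at hx hnx
      omega

theorem mem_nonnegCone {x : ChangGroup hC} : x ∈ nonnegCone hC ↔ 0 ≤ x.intPart := Iff.rfl

instance : HasMemOrNegMem (nonnegCone hC) where
  mem_or_neg_mem x := by
    rcases le_or_gt 0 x.intPart with h | h
    · exact Or.inl (mem_nonnegCone.mpr h)
    · refine Or.inr (mem_nonnegCone.mpr ((?_ : (0 : ℤ) ≤ -x.intPart - 1).trans (intPart_neg_le x)))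
      omega

open scoped Classical in
noncomputable instance : LinearOrder (ChangGroup hC) := .mkOfAddGroupCone (nonnegCone hC)

instance : IsOrderedAddMonoid (ChangGroup hC) := .mkOfCone (nonnegCone hC)

theorem le_iff_nonneg_intPart_sub (x y : ChangGroup hC) : x ≤ y ↔ 0 ≤ (y - x).intPart :=
  mem_nonnegCone

open scoped Classical in
/-- `a ↦ 0 + a`; since `1` has no fractional representation, it goes to `1 + 0`. -/
noncomputable def ofMV (hC : IsMVChain M) (a : α) : ChangGroup hC :=
  if h : a = M.one then 1 else ⟨0, a, h⟩

theorem ofMV_one : ofMV hC M.one = 1 := dif_pos rfl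

theorem ofMV_of_ne_one {a : α} (h : a ≠ M.one) : ofMV hC a = ⟨0, a, h⟩ := dif_neg h

theorem ofMV_zero : ofMV hC M.zero = 0 := ofMV_of_ne_one hC.zero_ne_one

theorem ofMV_injective : Function.Injective (ofMV hC) := by
  intro a b hab
  by_cases ha : a = M.one <;> by_cases hb : b = M.one
  · rw [ha, hb]
  · rw [ha, ofMV_one, ofMV_of_ne_one hb, one_def, mk_eq_mk] at hab
    omega
  · rw [hb, ofMV_one, ofMV_of_ne_one ha, one_def, mk_eq_mk] at hab
    omega
  · rw [ofMV_of_ne_one ha, ofMV_of_ne_one hb, mk_eq_mk] at hab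
    exact hab.2

theorem ofMV_nonneg (a : α) : 0 ≤ ofMV hC a := by
  rw [le_iff_nonneg_intPart_sub, sub_zero]
  by_cases ha : a = M.one
  · rw [ha, ofMV_one]; exact zero_le_one
  · rw [ofMV_of_ne_one ha]

theorem ofMV_add_ofMV (a b : α) :
    ofMV hC a + ofMV hC b = ofMV hC (a ⊕ₘ b) + ofMV hC (a ⊙ b) := by
  by_cases ha : a = M.one
  · subst ha
    rw [hC.oplus_comm, hC.oplus_one, hC.one_odot]
  by_cases hb : b = M.one
  · subst hb
    rw [hC.oplus_one, hC.odot_one, add_comm]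
  rw [ofMV_of_ne_one ha, ofMV_of_ne_one hb]
  by_cases h : a ⊕ₘ b = M.one
  · have h0 : M.zero ⊕ₘ a ⊙ b ≠ M.one := by
      rw [hC.oplus_comm, hC.oplus_zero]; exact hC.odot_ne_one ha b
    rw [mk_add_mk_of_oplus_eq_one h, h, ofMV_one, ofMV_of_ne_one (hC.odot_ne_one ha b), one_def,
      mk_add_mk_of_oplus_ne_one h0, mk_eq_mk]
    exact ⟨rfl, by rw [hC.oplus_comm, hC.oplus_zero]⟩
  · rw [mk_add_mk_of_oplus_ne_one h, ofMV_of_ne_one h,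
      hC.odot_eq_zero_iff.mpr (hC.le_neg_of_oplus_ne_one h), ofMV_zero]
    exact (add_zero _).symm

theorem ofMV_mono {a b : α} (h : a ≼ b) : ofMV hC a ≤ ofMV hC b := by
  have hb : b ⊙ ∼a ⊕ₘ a = b := hC.odot_neg_oplus_cancel h
  have h0 : b ⊙ ∼a ⊙ a = M.zero := by rw [hC.odot_assoc, hC.odot_comm (∼a), hC.odot_neg_self,
    hC.odot_zero]
  have := ofMV_add_ofMV (hC := hC) (b ⊙ ∼a) a
  rw [hb, h0, ofMV_zero, add_zero] at this
  rw [← this]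
  exact le_add_of_nonneg_left (ofMV_nonneg _)

theorem ofMV_nsum_le_nsmul (b : α) (n : ℕ) : ofMV hC (M.nsum n b) ≤ n • ofMV hC b := by
  induction n with
  | zero => rw [zero_nsmul, MVOps.nsum, ofMV_zero]
  | succ n ih =>
    rw [MVOps.nsum, succ_nsmul]
    calc ofMV hC (M.nsum n b ⊕ₘ b)
        ≤ ofMV hC (M.nsum n b ⊕ₘ b) + ofMV hC (M.nsum n b ⊙ b) :=
          le_add_of_nonneg_right (ofMV_nonneg _)
      _ = ofMV hC (M.nsum n b) + ofMV hC b := (ofMV_add_ofMV _ _).symm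
      _ ≤ n • ofMV hC b + ofMV hC b := add_le_add_left ih _

instance : ZeroLEOneClass (ChangGroup hC) where
  zero_le_one := by rw [le_iff_nonneg_intPart_sub, sub_zero, one_def]; exact zero_le_one

instance : NeZero (1 : ChangGroup hC) where
  out h := by rw [one_def, zero_def, mk_eq_mk] at h; omega

theorem nsmul_one (n : ℕ) : n • (1 : ChangGroup hC) = ⟨n, M.zero, hC.zero_ne_one⟩ := by
  induction n with
  | zero => rw [zero_nsmul]; rfl
  | succ n ih =>
    have h0 : M.zero ⊕ₘ M.zero ≠ M.one := by rw [hC.oplus_zero]; exact hC.zero_ne_one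
    rw [succ_nsmul, ih, one_def, mk_add_mk_of_oplus_ne_one h0, mk_eq_mk]
    exact ⟨by push_cast; ring, hC.oplus_zero _⟩

theorem exists_le_nsmul_one (x : ChangGroup hC) : ∃ n : ℕ, x ≤ n • 1 := by
  refine ⟨(x.intPart + 1).toNat, ?_⟩
  rw [le_iff_nonneg_intPart_sub, nsmul_one, sub_eq_add_neg]
  have h₁ := intPart_add_le ⟨((x.intPart + 1).toNat : ℤ), M.zero, hC.zero_ne_one⟩ (-x)
  have h₂ := intPart_neg_le x
  dsimp only at h₁
  omega

theorem exists_one_le_nsmul (hfin : M.HasFiniteOrders) {y : ChangGroup hC} (hy : 0 < y) :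
    ∃ n : ℕ, 1 ≤ n • y := by
  have hk : 0 ≤ y.intPart := by simpa only [le_iff_nonneg_intPart_sub, sub_zero] using hy.le
  obtain ⟨k, b, hb⟩ := y
  rcases hk.eq_or_lt with hk | hk
  · have hb0 : b ≠ M.zero := by
      rintro rfl
      exact hy.ne' (by rw [zero_def, mk_eq_mk]; exact ⟨hk.symm, rfl⟩)
    obtain ⟨n, hn⟩ := hfin b hb0
    refine ⟨n, ?_⟩
    dsimp only at hk
    subst hk
    rw [← ofMV_of_ne_one hb, ← ofMV_one, ← hn]
    exact ofMV_nsum_le_nsmul b n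
  · refine ⟨1, ?_⟩
    rw [one_nsmul, le_iff_nonneg_intPart_sub, sub_eq_add_neg, one_def, neg_of_fracPart_eq_zero rfl]
    have h := intPart_add_le (hC := hC) ⟨k, b, hb⟩ ⟨-1, M.zero, hC.zero_ne_one⟩
    dsimp only at h hk ⊢
    omega

theorem archimedean (hfin : M.HasFiniteOrders) : Archimedean (ChangGroup hC) where
  arch x _ hy := by
    obtain ⟨m, hm⟩ := exists_le_nsmul_one x
    obtain ⟨n, hn⟩ := exists_one_le_nsmul hfin hy
    refine ⟨n * m, hm.trans ?_⟩
    rw [mul_nsmul]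
    exact nsmul_le_nsmul_right hn m

end ChangGroup

/-! ### The embedding into `[0,1]` -/

namespace IsMVChain

theorem isMVHom_stdMV_of (hC : IsMVChain M) {f : α → unitInterval} (h0 : f M.zero = 0)
    (h1 : f M.one = 1) (hmono : ∀ {a b}, a ≼ b → f a ≤ f b)
    (hchang : ∀ a b, (f a : ℝ) + f b = f (a ⊕ₘ b) + f (a ⊙ b)) : IsMVHom M stdMV f := by
  have hneg (a : α) : (f (∼a) : ℝ) = 1 - f a := by
    have := hchang a (∼a)
    rw [hC.oplus_neg_self, hC.odot_neg_self, h0, h1] at this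
    push_cast at this
    linarith
  have hodot (a b : α) : (f (a ⊙ b) : ℝ) = max 0 ((f a : ℝ) + f b - 1) := by
    have := hchang a b
    rcases hC.oplus_eq_one_or_odot_eq_zero a b with h | h
    · rw [h, h1] at this
      push_cast at this
      rw [max_eq_right (by linarith [unitInterval.nonneg (f (a ⊙ b))])]
      linarith
    · rw [h, h0] at this ⊢
      push_cast at this ⊢
      rw [max_eq_left (by linarith [unitInterval.le_one (f (a ⊕ₘ b))])]
  refine ⟨h0, h1, fun x y => ?_, fun x y => ?_, fun x y => Subtype.ext (hodot x y),
    fun x y => Subtype.ext ?_⟩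
  · rcases hC.le_total x y with h | h
    · rw [h]; exact (min_eq_left (hmono h)).symm
    · rw [hC.meet_comm, h]; exact (min_eq_right (hmono h)).symm
  · rcases hC.le_total x y with h | h
    · rw [hC.le_iff_join_eq.mp h]; exact (max_eq_right (hmono h)).symm
    · rw [hC.join_comm, hC.le_iff_join_eq.mp h]; exact (max_eq_left (hmono h)).symm
  · rw [← hC.neg_odot_neg, hneg, hodot, hneg]
    show _ = min 1 (1 - (f x : ℝ) + f y)
    rw [← min_sub_sub_left]
    congr 1 <;> ring

theorem exists_injective_isMVHom_stdMV (hC : IsMVChain M) (hfin : M.HasFiniteOrders) :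
    ∃ f : α → unitInterval, Function.Injective f ∧ IsMVHom M stdMV f := by
  have := ChangGroup.archimedean (hC := hC) hfin
  obtain ⟨e, he_inj, he_one⟩ : ∃ e : ChangGroup hC →+o ℝ, Function.Injective e ∧ e 1 = 1 :=
    ⟨_, Archimedean.embedReal_injective _, Archimedean.embedReal_one⟩
  have he_mono {a b : α} (h : a ≼ b) : e (ChangGroup.ofMV hC a) ≤ e (ChangGroup.ofMV hC b) :=
    OrderHomClass.mono e (ChangGroup.ofMV_mono h)
  have mem (a : α) : e (ChangGroup.ofMV hC a) ∈ unitInterval := by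
    constructor
    · simpa only [ChangGroup.ofMV_zero, map_zero] using he_mono (hC.zero_le a)
    · simpa only [ChangGroup.ofMV_one, he_one] using he_mono (hC.le_one a)
  refine ⟨fun a => ⟨e (ChangGroup.ofMV hC a), mem a⟩, ?_, hC.isMVHom_stdMV_of ?_ ?_ he_mono ?_⟩
  · intro a b h
    exact ChangGroup.ofMV_injective (he_inj (congrArg Subtype.val h))
  · exact Subtype.ext (by simp only [ChangGroup.ofMV_zero, map_zero]; rfl)
  · exact Subtype.ext (by simp only [ChangGroup.ofMV_one, he_one]; rfl)
  · intro a b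
    show e _ + e _ = e _ + e _
    rw [← map_add, ← map_add, ChangGroup.ofMV_add_ofMV]

end IsMVChain

end

/-- every simple MV-algebra embeds into the standard MV-algebra [0,1];
that is, [0,1] is the maximum simple MV-algebra. -/
theorem stdMV_maximum_simple {α : Type} (M : MVOps α)
    (hMV : IsMVAlgebra M) (hSimple : IsSimpleMV M) :
    ∃ f : α → unitInterval, Function.Injective f ∧ IsMVHom M stdMV f :=
  (hSimple.isMVChain hMV).exists_injective_isMVHom_stdMV (hSimple.hasFiniteOrders hMV)
end

section
/- The standard MV-algebra [0,1]_MV is self-injective: every MV-algebra homomorphism from an MV-subalgebra of [0,1]_MV into [0,1]_MV extends to an endomorphism of [0,1]_MV. In fact every such homomorphism is the inclusion map. -/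
namespace MVSelfInj

/-- n-fold ⊙-power: x^0 = 1, x^(n+1) = x^n ⊙ x. -/
def opow {α : Type*} (M : MVOps α) : ℕ → α → α
  | 0, _ => M.one
  | n + 1, x => M.odot (opow M n x) x

variable {α : Type*} {β : Type*} {M : MVOps α} {N : MVOps β} {g : α → β}

lemma hom_neg (h : IsMVHom M N g) (x : α) : g (M.neg x) = N.neg (g x) := by
  simp [MVOps.neg, h.map_impl, h.map_zero]

lemma hom_oplus (h : IsMVHom M N g) (x y : α) :
    g (M.oplus x y) = N.oplus (g x) (g y) := by
  simp [MVOps.oplus, hom_neg h, h.map_odot]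

lemma hom_nsum (h : IsMVHom M N g) (n : ℕ) (x : α) :
    g (M.nsum n x) = N.nsum n (g x) := by
  induction n with
  | zero => exact h.map_zero
  | succ n ih => simp [MVOps.nsum, hom_oplus h, ih]

lemma hom_opow (h : IsMVHom M N g) (n : ℕ) (x : α) :
    g (opow M n x) = opow N n (g x) := by
  induction n with
  | zero => exact h.map_one
  | succ n ih => simp [opow, h.map_odot, ih]

lemma val_hom (M : MVOps α) (S : Set α) (h : IsMVSubalg M S) :
    IsMVHom (M.restrict S h) M Subtype.val :=
  ⟨rfl, rfl, fun _ _ => rfl, fun _ _ => rfl, fun _ _ => rfl, fun _ _ => rfl⟩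

lemma std_odot_val (x y : unitInterval) :
    ((stdMV.odot x y : unitInterval) : ℝ) = max 0 ((x : ℝ) + y - 1) := rfl

lemma std_zero_val : ((stdMV.zero : unitInterval) : ℝ) = 0 := rfl

lemma std_one_val : ((stdMV.one : unitInterval) : ℝ) = 1 := rfl

lemma std_neg_val (x : unitInterval) : ((stdMV.neg x : unitInterval) : ℝ) = 1 - x := by
  show min 1 (1 - (x : ℝ) + ((stdMV.zero : unitInterval) : ℝ)) = 1 - (x : ℝ)
  rw [std_zero_val]
  have := x.2.1
  have := x.2.2
  rw [min_eq_right (by linarith)]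
  ring

lemma std_oplus_val (x y : unitInterval) :
    ((stdMV.oplus x y : unitInterval) : ℝ) = min 1 ((x : ℝ) + y) := by
  have h1 : ((stdMV.oplus x y : unitInterval) : ℝ)
      = 1 - ((stdMV.odot (stdMV.neg x) (stdMV.neg y) : unitInterval) : ℝ) :=
    std_neg_val _
  rw [h1, std_odot_val, std_neg_val, std_neg_val]
  rcases le_total ((1 : ℝ) - x + (1 - y) - 1) 0 with h | h
  · rw [max_eq_left h, min_eq_left (by linarith)]; ring
  · rw [max_eq_right h, min_eq_right (by linarith)]; ring

lemma std_nsum_val (n : ℕ) (x : unitInterval) :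
    ((stdMV.nsum n x : unitInterval) : ℝ) = min 1 ((n : ℝ) * x) := by
  induction n with
  | zero =>
    show ((stdMV.zero : unitInterval) : ℝ) = _
    rw [std_zero_val]
    push_cast
    rw [zero_mul]; simp
  | succ n ih =>
    show ((stdMV.oplus (stdMV.nsum n x) x : unitInterval) : ℝ) = _
    rw [std_oplus_val, ih]
    have hx0 := x.2.1
    push_cast
    rcases le_total (1 : ℝ) ((n:ℝ) * x) with h | h
    · rw [min_eq_left h, min_eq_left (by linarith), min_eq_left (by nlinarith)]
    · rw [min_eq_right h]
      congr 1
      ring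

lemma std_opow_val (n : ℕ) (x : unitInterval) :
    ((opow stdMV n x : unitInterval) : ℝ) = max 0 ((n : ℝ) * x + 1 - n) := by
  induction n with
  | zero =>
    show ((stdMV.one : unitInterval) : ℝ) = _
    rw [std_one_val]
    norm_num
  | succ n ih =>
    show ((stdMV.odot (opow stdMV n x) x : unitInterval) : ℝ) = _
    rw [std_odot_val, ih]
    have hx0 := x.2.1
    have hx1 := x.2.2
    push_cast
    rcases le_total ((n : ℝ) * x + 1 - n) 0 with h | h
    · rw [max_eq_left h, max_eq_left (by linarith), max_eq_left (by nlinarith)]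
    · rw [max_eq_right h, max_comm]
      rcases le_total ((n:ℝ) * x + 1 - n + x - 1) 0 with h2 | h2
      · rw [max_eq_right h2, max_eq_left (by linarith)]
      · rw [max_eq_left h2, max_eq_right (by linarith)]
        ring

end MVSelfInj
namespace MVSelfInj

variable {S : Set unitInterval} {hS : IsMVSubalg stdMV S} {f : S → unitInterval}

/-- `G f p q` : f preserves the lower bound p/q. -/
def G (f : S → unitInterval) (p q : ℕ) : Prop :=
  ∀ y : S, (p : ℝ) ≤ q * (y.1 : ℝ) → (p : ℝ) ≤ q * ((f y : unitInterval) : ℝ)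

lemma lt_div_add_one_mul (q p : ℕ) (hp : 0 < p) : q < (q/p)*p + p := by
  have h := (Nat.div_lt_iff_lt_mul hp).mp (Nat.lt_succ_self (q/p))
  calc q < (q/p + 1) * p := h
  _ = (q/p)*p + p := by ring

lemma restrict_opow_val (hS : IsMVSubalg stdMV S) (m : ℕ) (y : S) :
    (((opow (stdMV.restrict S hS) m y).1 : unitInterval) : ℝ)
      = max 0 ((m : ℝ) * (y.1 : ℝ) + 1 - m) := by
  rw [show (opow (stdMV.restrict S hS) m y).1 = opow stdMV m y.1 from
      hom_opow (val_hom stdMV S hS) m y]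
  exact std_opow_val m y.1

lemma restrict_nsum_val (hS : IsMVSubalg stdMV S) (n : ℕ) (y : S) :
    ((((stdMV.restrict S hS).nsum n y).1 : unitInterval) : ℝ)
      = min 1 ((n : ℝ) * (y.1 : ℝ)) := by
  rw [show ((stdMV.restrict S hS).nsum n y).1 = stdMV.nsum n y.1 from
      hom_nsum (val_hom stdMV S hS) n y]
  exact std_nsum_val n y.1

lemma GM (hf : IsMVHom (stdMV.restrict S hS) stdMV f) {p p' q m : ℕ}
    (hm : 1 ≤ m) (hp' : 1 ≤ p')
    (hrel : (m : ℝ) * p = p' + ((m : ℝ) - 1) * q)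
    (h : G f p' q) : G f p q := by
  intro y hy
  have hm' : (1 : ℝ) ≤ m := by exact_mod_cast hm
  have hp'' : (1 : ℝ) ≤ p' := by exact_mod_cast hp'
  have hq0 : (0 : ℝ) ≤ q := Nat.cast_nonneg q
  set z := opow (stdMV.restrict S hS) m y with hz
  have hzval : ((z.1 : unitInterval) : ℝ) = max 0 ((m : ℝ) * (y.1 : ℝ) + 1 - m) :=
    restrict_opow_val hS m y
  have h2 : (m : ℝ) * ((p : ℝ)) ≤ m * (q * (y.1 : ℝ)) :=
    mul_le_mul_of_nonneg_left hy (by linarith)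
  have h1 : (p' : ℝ) ≤ q * ((z.1 : unitInterval) : ℝ) := by
    rw [hzval]
    have hmax : (m : ℝ) * (y.1 : ℝ) + 1 - m ≤ max 0 ((m : ℝ) * (y.1 : ℝ) + 1 - m) :=
      le_max_right _ _
    have h3 : (q : ℝ) * ((m : ℝ) * (y.1 : ℝ) + 1 - m)
        ≤ q * max 0 ((m : ℝ) * (y.1 : ℝ) + 1 - m) :=
      mul_le_mul_of_nonneg_left hmax hq0
    have e : (q : ℝ) * ((m : ℝ) * (y.1 : ℝ) + 1 - m)
        = m * ((q : ℝ) * (y.1 : ℝ)) + q - m * q := by ring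
    linarith
  have hz' := h z h1
  have hfz : f z = opow stdMV m (f y) := hom_opow hf m y
  rw [hfz, std_opow_val] at hz'
  rcases le_or_gt ((m : ℝ) * ((f y : unitInterval) : ℝ) + 1 - m) 0 with hc | hc
  · rw [max_eq_left hc, mul_zero] at hz'
    linarith
  · rw [max_eq_right hc.le] at hz'
    have e2 : (q : ℝ) * ((m : ℝ) * ((f y : unitInterval) : ℝ) + 1 - m)
        = m * ((q : ℝ) * ((f y : unitInterval) : ℝ)) + q - m * q := by ring
    have : (m : ℝ) * p ≤ m * (q * ((f y : unitInterval) : ℝ)) := by linarith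
    exact le_of_mul_le_mul_left this (by linarith)

lemma GN (hf : IsMVHom (stdMV.restrict S hS) stdMV f) {p q n : ℕ}
    (hn : 1 ≤ n) (hnpq : n * p ≤ q) (h : G f (n * p) q) : G f p q := by
  intro y hy
  have hn' : (1 : ℝ) ≤ n := by exact_mod_cast hn
  have hq0 : (0 : ℝ) ≤ q := Nat.cast_nonneg q
  have hnpq' : ((n * p : ℕ) : ℝ) ≤ q := by exact_mod_cast hnpq
  set z := (stdMV.restrict S hS).nsum n y with hz
  have hzval : ((z.1 : unitInterval) : ℝ) = min 1 ((n : ℝ) * (y.1 : ℝ)) :=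
    restrict_nsum_val hS n y
  have h1 : ((n * p : ℕ) : ℝ) ≤ q * ((z.1 : unitInterval) : ℝ) := by
    rw [hzval]
    rcases le_total (1 : ℝ) ((n : ℝ) * (y.1 : ℝ)) with hc | hc
    · rw [min_eq_left hc, mul_one]; exact hnpq'
    · rw [min_eq_right hc]
      have h2 : (n : ℝ) * ((p : ℝ)) ≤ n * (q * (y.1 : ℝ)) :=
        mul_le_mul_of_nonneg_left hy (by linarith)
      push_cast
      nlinarith
  have hz' := h z h1
  have hfz : f z = stdMV.nsum n (f y) := hom_nsum hf n y
  rw [hfz, std_nsum_val] at hz'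
  have h3 : (q : ℝ) * min 1 ((n : ℝ) * ((f y : unitInterval) : ℝ))
      ≤ q * ((n : ℝ) * ((f y : unitInterval) : ℝ)) :=
    mul_le_mul_of_nonneg_left (min_le_right _ _) hq0
  have h4 : (n : ℝ) * p ≤ n * (q * ((f y : unitInterval) : ℝ)) := by
    push_cast at hz'
    nlinarith
  exact le_of_mul_le_mul_left h4 (by linarith)

lemma Gbase (hf : IsMVHom (stdMV.restrict S hS) stdMV f) {q : ℕ} (hq : 1 ≤ q) :
    G f q q := by
  intro y hy
  have hq' : (0 : ℝ) < q := by exact_mod_cast hq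
  have h1 : (y.1 : ℝ) = 1 := le_antisymm y.1.2.2 (by nlinarith [y.1.2.2])
  have hyone : y = (stdMV.restrict S hS).one := by
    apply Subtype.ext
    apply Subtype.ext
    exact h1
  rw [hyone, hf.map_one, std_one_val, mul_one]

lemma key (hf : IsMVHom (stdMV.restrict S hS) stdMV f) :
    ∀ p q : ℕ, 1 ≤ p → p ≤ q → G f p q := by
  intro p
  induction p using Nat.strong_induction_on with
  | _ p ih =>
    intro q hp hpq
    rcases eq_or_lt_of_le hpq with rfl | hlt
    · exact Gbase hf hp
    · -- p < q
      have hp0 : 0 < p := hp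
      have hn1 : 1 ≤ q / p := (Nat.one_le_div_iff hp0).mpr hpq
      have hPq : (q / p) * p ≤ q := Nat.div_mul_le_self q p
      have hqlt : q < (q / p) * p + p := lt_div_add_one_mul q p hp0
      obtain ⟨n, hn⟩ : ∃ n, n = q / p := ⟨_, rfl⟩
      rw [← hn] at hn1 hPq hqlt
      obtain ⟨P, hP⟩ : ∃ P, P = n * p := ⟨_, rfl⟩
      rw [← hP] at hPq hqlt
      have hP1 : 1 ≤ P := hP ▸ Nat.mul_le_mul hn1 hp
      rcases eq_or_lt_of_le hPq with hPe | hPlt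
      · -- P = q : one n-move to the base case
        refine GN hf hn1 (hP ▸ hPq) ?_
        rw [← hP, hPe]
        exact Gbase hf (by omega)
      · -- P < q : n-move then m-move
        obtain ⟨d, hd⟩ : ∃ d, d = q - P := ⟨_, rfl⟩
        have hd1 : 0 < d := by omega
        have hdq : d ≤ q - 1 := by omega
        have hm1 : 1 ≤ (q - 1) / d := (Nat.one_le_div_iff hd1).mpr hdq
        have hmd : ((q - 1) / d) * d ≤ q - 1 := Nat.div_mul_le_self _ _
        have hmd2 : q - 1 < ((q - 1) / d) * d + d := lt_div_add_one_mul _ _ hd1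
        obtain ⟨m, hm⟩ : ∃ m, m = (q - 1) / d := ⟨_, rfl⟩
        rw [← hm] at hm1 hmd hmd2
        obtain ⟨D, hD⟩ : ∃ D, D = m * d := ⟨_, rfl⟩
        rw [← hD] at hmd hmd2
        obtain ⟨p', hp'⟩ : ∃ p', p' = q - D := ⟨_, rfl⟩
        have hp'1 : 1 ≤ p' := by omega
        have hp'd : p' ≤ d := by omega
        have hp'lt : p' < p := by omega
        have hp'q : p' ≤ q := by omega
        -- real-number relation  m * P = p' + (m-1) * q
        have hDq : D ≤ q := by omega
        have hPq' : P ≤ q := by omega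
        have hrelR : (m : ℝ) * P = p' + ((m : ℝ) - 1) * q := by
          have e1 : (p' : ℝ) = q - D := by
            rw [hp', Nat.cast_sub hDq]
          have e2 : (D : ℝ) = m * d := by exact_mod_cast hD
          have e3 : (d : ℝ) = q - P := by
            rw [hd, Nat.cast_sub hPq']
          rw [e1, e2, e3]; ring
        have hrec : G f p' q := ih p' hp'lt q hp'1 hp'q
        have hGP : G f P q := GM hf hm1 hp'1 hrelR hrec
        refine GN hf hn1 (hP ▸ hPq') ?_
        rw [← hP]
        exact hGP

end MVSelfInj
/-- the standard MV-algebra [0,1] is self-injective: every MV-homomorphism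
from an MV-subalgebra of [0,1] into [0,1] extends to an endomorphism of [0,1]; in fact
every such homomorphism is the inclusion map. -/
theorem stdMV_self_injective (S : Set unitInterval) (hS : IsMVSubalg stdMV S)
    (f : S → unitInterval) (hf : IsMVHom (stdMV.restrict S hS) stdMV f) :
    (∃ g : unitInterval → unitInterval, IsMVHom stdMV stdMV g ∧ ∀ x : S, g x.1 = f x) ∧
    (∀ x : S, f x = x.1) := by
  have step1 : ∀ y : S, (y.1 : ℝ) ≤ ((f y : unitInterval) : ℝ) := by
    intro y
    by_contra hcon
    push_neg at hcon
    obtain ⟨r, hr1, hr2⟩ := exists_rat_btwn hcon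
    have hfy0 : (0 : ℝ) ≤ ((f y : unitInterval) : ℝ) := (f y).2.1
    have hy1 : (y.1 : ℝ) ≤ 1 := y.1.2.2
    have hr0 : 0 < r := by
      have h : (0 : ℝ) < r := lt_of_le_of_lt hfy0 hr1
      exact_mod_cast h
    have hq0 : (0 : ℝ) < r.den := by exact_mod_cast r.pos
    have hnum : ((r.num.toNat : ℕ) : ℤ) = r.num :=
      Int.toNat_of_nonneg (le_of_lt (Rat.num_pos.mpr hr0))
    have hrden : (r : ℝ) * r.den = r.num := by
      rw [Rat.cast_def]; field_simp
    have hcast : ((r.num.toNat : ℕ) : ℝ) = r * r.den := by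
      rw [hrden]; exact_mod_cast congrArg (fun z : ℤ => (z : ℝ)) hnum
    have hp1 : 1 ≤ r.num.toNat := by
      have h := Rat.num_pos.mpr hr0; omega
    have hpq : r.num.toNat ≤ r.den := by
      have hrlt1 : (r : ℝ) < 1 := lt_of_lt_of_le hr2 hy1
      have h : ((r.num.toNat : ℕ) : ℝ) < r.den := by rw [hcast]; nlinarith
      exact_mod_cast h.le
    have hk := MVSelfInj.key hf r.num.toNat r.den hp1 hpq y (by rw [hcast]; nlinarith)
    rw [hcast] at hk
    have hle : (r : ℝ) ≤ ((f y : unitInterval) : ℝ) := by nlinarith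
    linarith
  have step2 : ∀ y : S, ((f y : unitInterval) : ℝ) ≤ y.1 := by
    intro y
    have h1 := step1 ((stdMV.restrict S hS).neg y)
    have hval : ((((stdMV.restrict S hS).neg y).1 : unitInterval) : ℝ) = 1 - (y.1 : ℝ) := by
      rw [show ((stdMV.restrict S hS).neg y).1 = stdMV.neg y.1 from
        MVSelfInj.hom_neg (MVSelfInj.val_hom stdMV S hS) y]
      exact MVSelfInj.std_neg_val y.1
    rw [hval, MVSelfInj.hom_neg hf y, MVSelfInj.std_neg_val] at h1
    linarith
  have hfix : ∀ x : S, f x = x.1 := fun x =>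
    Subtype.ext (le_antisymm (step2 x) (step1 x))
  exact ⟨⟨id, ⟨rfl, rfl, fun _ _ => rfl, fun _ _ => rfl, fun _ _ => rfl, fun _ _ => rfl⟩,
    fun x => (hfix x).symm⟩, hfix⟩
end

section
/- Let 𝒜 be a variety with the congruence extension property and with distinguished constants 0, 1 (i.e., 0 ≠ 1 in each nontrivial algebra). If I is a self-injective maximum simple algebra in 𝒜, then I is injective in 𝒜. -/
/-- An algebraic signature: a set of operation symbols with arities. -/
structure Signature where
  ops : Type
  arity : ops → ℕ

/-- An algebra of a given signature. -/
structure Alg (S : Signature) where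
  carrier : Type
  interp : ∀ o : S.ops, (Fin (S.arity o) → carrier) → carrier

/-- Homomorphism of algebras. -/
def IsHom {S : Signature} (A B : Alg S) (f : A.carrier → B.carrier) : Prop :=
  ∀ (o : S.ops) (v : Fin (S.arity o) → A.carrier), f (A.interp o v) = B.interp o (f ∘ v)

/-- A congruence: an equivalence relation compatible with all operations. -/
def IsCong {S : Signature} (A : Alg S) (r : A.carrier → A.carrier → Prop) : Prop :=
  Equivalence r ∧
  ∀ (o : S.ops) (v w : Fin (S.arity o) → A.carrier),
    (∀ i, r (v i) (w i)) → r (A.interp o v) (A.interp o w)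

/-- A subset closed under the operations. -/
def IsSubalg {S : Signature} (A : Alg S) (T : Set A.carrier) : Prop :=
  ∀ (o : S.ops) (v : Fin (S.arity o) → A.carrier), (∀ i, v i ∈ T) → A.interp o v ∈ T

/-- The subalgebra on a closed subset. -/
def Alg.sub {S : Signature} (A : Alg S) (T : Set A.carrier) (h : IsSubalg A T) : Alg S where
  carrier := T
  interp o v := ⟨A.interp o (fun i => (v i).1), h o _ (fun i => (v i).2)⟩

/-- Product algebra of a family. -/
def prodAlg {S : Signature} (ι : Type) (F : ι → Alg S) : Alg S where
  carrier := ∀ i, (F i).carrier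
  interp o v := fun i => (F i).interp o (fun j => v j i)

/-- A variety: a class of algebras closed under subalgebras, homomorphic images and
products (by Birkhoff's theorem, exactly the equationally definable classes). -/
structure IsVariety {S : Signature} (K : Set (Alg S)) : Prop where
  sub_closed : ∀ A ∈ K, ∀ (T : Set A.carrier) (h : IsSubalg A T), A.sub T h ∈ K
  hom_closed : ∀ A ∈ K, ∀ B : Alg S, (∃ f : A.carrier → B.carrier,
    IsHom A B f ∧ Function.Surjective f) → B ∈ K
  prod_closed : ∀ (ι : Type) (F : ι → Alg S), (∀ i, F i ∈ K) → prodAlg ι F ∈ K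

/-- The congruence extension property: every congruence on a subalgebra extends. -/
def HasCEP {S : Signature} (K : Set (Alg S)) : Prop :=
  ∀ A ∈ K, ∀ (T : Set A.carrier) (h : IsSubalg A T),
    ∀ r : T → T → Prop, IsCong (A.sub T h) r →
      ∃ R : A.carrier → A.carrier → Prop, IsCong A R ∧
        ∀ x y : T, R x.1 y.1 ↔ r x y

/-- Simplicity: nontrivial carrier and only the two trivial congruences. -/
def IsSimpleAlg {S : Signature} (A : Alg S) : Prop :=
  Nontrivial A.carrier ∧ ∀ r : A.carrier → A.carrier → Prop, IsCong A r →
    (∀ x y, r x y ↔ x = y) ∨ (∀ x y, r x y)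

/-- Maximum simple algebra in a class: simple, and every simple member embeds in it. -/
def IsMaximumSimple {S : Signature} (K : Set (Alg S)) (I : Alg S) : Prop :=
  I ∈ K ∧ IsSimpleAlg I ∧
  ∀ A ∈ K, IsSimpleAlg A →
    ∃ f : A.carrier → I.carrier, Function.Injective f ∧ IsHom A I f

/-- Self-injectivity: homomorphisms from subalgebras of I into I extend to
endomorphisms of I. -/
def IsSelfInjective {S : Signature} (I : Alg S) : Prop :=
  ∀ (T : Set I.carrier) (h : IsSubalg I T) (f : T → I.carrier),
    IsHom (I.sub T h) I f →
      ∃ g : I.carrier → I.carrier, IsHom I I g ∧ ∀ x : T, g x.1 = f x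

/-- Injectivity in a class K. -/
def IsInjectiveIn {S : Signature} (K : Set (Alg S)) (I : Alg S) : Prop :=
  ∀ B ∈ K, ∀ C ∈ K, ∀ f : B.carrier → C.carrier, IsHom B C f → Function.Injective f →
    ∀ g : B.carrier → I.carrier, IsHom B I g →
      ∃ h : C.carrier → I.carrier, IsHom C I h ∧ h ∘ f = g


section AuxUA

variable {S : Signature}

theorem fin0_ext {n : ℕ} (h : n = 0) {X : Sort*} (v w : Fin n → X) : v = w := by
  subst h; exact funext fun i => i.elim0

theorem isHom_comp {A B C : Alg S} {f : A.carrier → B.carrier} {g : B.carrier → C.carrier}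
    (hf : IsHom A B f) (hg : IsHom B C g) : IsHom A C (fun a => g (f a)) := by
  intro op v
  show g (f (A.interp op v)) = _
  rw [hf op v, hg op (f ∘ v)]
  rfl

theorem isHom_const {A B : Alg S} {f : A.carrier → B.carrier} (hf : IsHom A B f)
    {zz : S.ops} (hzz : S.arity zz = 0)
    (v : Fin (S.arity zz) → A.carrier) (w : Fin (S.arity zz) → B.carrier) :
    f (A.interp zz v) = B.interp zz w := by
  rw [hf zz v]; exact congrArg _ (fin0_ext hzz _ _)

def congSetoid (C : Alg S) {R : C.carrier → C.carrier → Prop} (hR : IsCong C R) :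
    Setoid C.carrier := ⟨R, hR.1⟩

noncomputable def quotAlg (C : Alg S) {R : C.carrier → C.carrier → Prop} (hR : IsCong C R) : Alg S where
  carrier := Quotient (congSetoid C hR)
  interp o v := Quotient.mk _ (C.interp o (fun i => (v i).out))

theorem quot_mk_isHom (C : Alg S) {R : C.carrier → C.carrier → Prop} (hR : IsCong C R) :
    IsHom C (quotAlg C hR) (Quotient.mk (congSetoid C hR)) := by
  intro op v
  apply Quotient.sound
  refine hR.2 op v _ (fun i => ?_)
  exact hR.1.symm (Quotient.exact (Quotient.out_eq (Quotient.mk (congSetoid C hR) (v i))))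

theorem chain_fin_ub {α : Type*} {c : Set (Set α)} (hc : IsChain (· ⊆ ·) c)
    (hne : c.Nonempty) : ∀ {n : ℕ} (s : Fin n → Set α), (∀ i, s i ∈ c) →
      ∃ t ∈ c, ∀ i, s i ⊆ t := by
  intro n
  induction n with
  | zero => exact fun s _ => ⟨hne.choose, hne.choose_spec, fun i => i.elim0⟩
  | succ k ih =>
    intro s hs
    obtain ⟨t, htc, ht⟩ := ih (fun i => s i.castSucc) (fun i => hs _)
    rcases hc.total htc (hs (Fin.last k)) with h | h
    · refine ⟨s (Fin.last k), hs _, fun i => ?_⟩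
      induction i using Fin.lastCases with
      | last => exact subset_rfl
      | cast j => exact (ht j).trans h
    · refine ⟨t, htc, fun i => ?_⟩
      induction i using Fin.lastCases with
      | last => exact h
      | cast j => exact ht j

end AuxUA

/-- let 𝒜 = K be a variety with the congruence extension property and
distinguished constants 0, 1 (nullary operation symbols taking distinct values in
every nontrivial member). If I is a self-injective maximum simple algebra in K,
then I is injective in K. -/
theorem self_injective_maximum_simple_is_injective {S : Signature}
    (K : Set (Alg S)) (hK : IsVariety K) (hCEP : HasCEP K)
    (z o : S.ops) (hz : S.arity z = 0) (ho : S.arity o = 0)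
    (hdist : ∀ A ∈ K, Nontrivial A.carrier →
      A.interp z (fun i => Fin.elim0 (hz ▸ i)) ≠ A.interp o (fun i => Fin.elim0 (ho ▸ i)))
    (I : Alg S) (hmax : IsMaximumSimple K I) (hself : IsSelfInjective I) :
    IsInjectiveIn K I := by
  classical
  obtain ⟨hIK, hIsimple, hIemb⟩ := hmax
  have hIne : I.interp z (fun i => Fin.elim0 (hz ▸ i)) ≠ I.interp o (fun i => Fin.elim0 (ho ▸ i)) :=
    hdist I hIK hIsimple.1
  intro B hB C hC f hf hfinj g hg
  let c0 : C.carrier := C.interp z (fun i => Fin.elim0 (hz ▸ i))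
  let c1 : C.carrier := C.interp o (fun i => Fin.elim0 (ho ▸ i))
  let b0 : B.carrier := B.interp z (fun i => Fin.elim0 (hz ▸ i))
  let b1 : B.carrier := B.interp o (fun i => Fin.elim0 (ho ▸ i))
  have hfb0 : f b0 = c0 := isHom_const hf hz _ _
  have hfb1 : f b1 = c1 := isHom_const hf ho _ _
  have hT : IsSubalg C (Set.range f) := by
    intro op v hv
    choose b hb using hv
    exact ⟨B.interp op b, by rw [hf op b]; exact congrArg _ (funext hb)⟩
  set TA := C.sub (Set.range f) hT with hTA
  let g' : TA.carrier → I.carrier := fun t => g (Classical.choose t.2)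
  have gspec : ∀ (t : TA.carrier) (b : B.carrier), f b = t.1 → g' t = g b := by
    intro t b hb
    exact congrArg g (hfinj ((Classical.choose_spec t.2).trans hb.symm))
  have hg' : IsHom TA I g' := by
    intro op v
    have hb : ∀ i, f (Classical.choose (v i).2) = (v i).1 := fun i => Classical.choose_spec (v i).2
    have h1 : f (B.interp op fun i => Classical.choose (v i).2) = (TA.interp op v).1 := by
      rw [hf op]; exact congrArg _ (funext hb)
    rw [gspec _ _ h1, hg op]
    rfl
  have hr0 : IsCong TA (fun x y => g' x = g' y) := by
    refine ⟨⟨fun _ => rfl, fun h => h.symm, fun h h' => h.trans h'⟩, ?_⟩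
    intro op v w h
    rw [hg' op v, hg' op w]
    exact congrArg _ (funext fun i => h i)
  obtain ⟨R0, hR0, hR0res⟩ := hCEP C hC (Set.range f) hT _ hr0
  let t0 : TA.carrier := ⟨c0, ⟨b0, hfb0⟩⟩
  let t1 : TA.carrier := ⟨c1, ⟨b1, hfb1⟩⟩
  have hg't0 : g' t0 = I.interp z (fun i => Fin.elim0 (hz ▸ i)) := by
    rw [gspec t0 b0 hfb0]; exact isHom_const hg hz _ _
  have hg't1 : g' t1 = I.interp o (fun i => Fin.elim0 (ho ▸ i)) := by
    rw [gspec t1 b1 hfb1]; exact isHom_const hg ho _ _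
  have hg'01 : g' t0 ≠ g' t1 := by rw [hg't0, hg't1]; exact hIne
  -- Key lemma: a congruence on C containing ker g' on T but strictly bigger relates c0 c1
  have keyA : ∀ (Θ : C.carrier → C.carrier → Prop), IsCong C Θ →
      (∀ x y : TA.carrier, g' x = g' y → Θ x.1 y.1) →
      (∃ x y : TA.carrier, Θ x.1 y.1 ∧ g' x ≠ g' y) → Θ c0 c1 := by
    rintro Θ hΘ hker ⟨x, y, hxy, hne⟩
    have hW' : IsSubalg I (Set.range g') := by
      intro op v hv
      choose u hu using hv
      exact ⟨TA.interp op u, by rw [hg' op u]; exact congrArg _ (funext hu)⟩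
    have hr : IsCong (I.sub (Set.range g') hW')
        (fun a b => ∃ x y : TA.carrier, g' x = a.1 ∧ g' y = b.1 ∧ Θ x.1 y.1) := by
      constructor
      · refine ⟨fun a => ?_, fun {a b} hab => ?_, fun {a b cc} hab hbc => ?_⟩
        · obtain ⟨x, hx⟩ := a.2; exact ⟨x, x, hx, hx, hΘ.1.refl _⟩
        · obtain ⟨x, y, h1, h2, h3⟩ := hab
          exact ⟨y, x, h2, h1, hΘ.1.symm h3⟩
        · obtain ⟨x, y, h1, h2, h3⟩ := hab
          obtain ⟨x', y', h1', h2', h3'⟩ := hbc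
          exact ⟨x, y', h1, h2', hΘ.1.trans h3 (hΘ.1.trans (hker y x' (h2.trans h1'.symm)) h3')⟩
      · intro op v w h
        choose xs ys h1 h2 h3 using h
        refine ⟨TA.interp op xs, TA.interp op ys, ?_, ?_, ?_⟩
        · rw [hg' op xs]; exact congrArg _ (funext h1)
        · rw [hg' op ys]; exact congrArg _ (funext h2)
        · exact hΘ.2 op _ _ h3
    obtain ⟨R', hR', hres⟩ := hCEP I hIK _ hW' _ hr
    have hRall : ∀ u v, R' u v := by
      rcases hIsimple.2 R' hR' with hcase | hcase
      · exfalso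
        have hxy' : R' (g' x) (g' y) :=
          (hres ⟨g' x, Set.mem_range_self x⟩ ⟨g' y, Set.mem_range_self y⟩).2 ⟨x, y, rfl, rfl, hxy⟩
        exact hne ((hcase _ _).1 hxy')
      · exact hcase
    obtain ⟨x', y', h1, h2, h3⟩ :=
      (hres ⟨g' t0, Set.mem_range_self t0⟩ ⟨g' t1, Set.mem_range_self t1⟩).1 (hRall _ _)
    exact hΘ.1.trans (hker t0 x' h1.symm) (hΘ.1.trans h3 (hker y' t1 h2))
  -- Zorn
  let F : Set (Set (C.carrier × C.carrier)) :=
    {R | IsCong C (fun a b => (a, b) ∈ R) ∧ (∀ a b, R0 a b → (a, b) ∈ R) ∧ (c0, c1) ∉ R}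
  have hR0F : {p : C.carrier × C.carrier | R0 p.1 p.2} ∈ F := by
    refine ⟨hR0, fun a b h => h, fun h => ?_⟩
    exact hg'01 ((hR0res t0 t1).1 h)
  have hzorn : ∀ c ⊆ F, IsChain (· ⊆ ·) c → c.Nonempty → ∃ ub ∈ F, ∀ s ∈ c, s ⊆ ub := by
    intro c hcF hchain hcne
    refine ⟨⋃₀ c, ⟨⟨⟨fun a => ?_, fun {a b} hab => ?_, fun {a b cc} hab hbc => ?_⟩, ?_⟩, ?_, ?_⟩,
      fun s hs => Set.subset_sUnion_of_mem hs⟩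
    · exact ⟨hcne.choose, hcne.choose_spec, ((hcF hcne.choose_spec).1.1.refl a)⟩
    · obtain ⟨s, hs, hab⟩ := hab
      exact ⟨s, hs, (hcF hs).1.1.symm hab⟩
    · obtain ⟨s, hs, hab⟩ := hab
      obtain ⟨t, ht, hbc⟩ := hbc
      rcases hchain.total hs ht with h | h
      · exact ⟨t, ht, (hcF ht).1.1.trans (h hab) hbc⟩
      · exact ⟨s, hs, (hcF hs).1.1.trans hab (h hbc)⟩
    · intro op v w h
      choose s hs hmem using h
      obtain ⟨t, htc, hts⟩ := chain_fin_ub hchain hcne s hs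
      exact ⟨t, htc, (hcF htc).1.2 op v w (fun i => hts i (hmem i))⟩
    · intro a b h
      exact ⟨hcne.choose, hcne.choose_spec, (hcF hcne.choose_spec).2.1 a b h⟩
    · rintro ⟨s, hs, hmem⟩
      exact (hcF hs).2.2 hmem
  obtain ⟨M, hR0M, hMmax⟩ := zorn_subset_nonempty F hzorn _ hR0F
  set θ : C.carrier → C.carrier → Prop := fun a b => (a, b) ∈ M with hθdef
  have hθ : IsCong C θ := hMmax.1.1
  have hθ01 : ¬ θ c0 c1 := hMmax.1.2.2
  have hθker : ∀ x y : TA.carrier, g' x = g' y → θ x.1 y.1 := fun x y h =>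
    hMmax.1.2.1 _ _ ((hR0res x y).2 h)
  have hθT : ∀ x y : TA.carrier, θ x.1 y.1 → g' x = g' y := by
    intro x y hxy
    by_contra hne
    exact hθ01 (keyA θ hθ hθker ⟨x, y, hxy, hne⟩)
  have hmaxθ : ∀ Θ : C.carrier → C.carrier → Prop, IsCong C Θ → (∀ a b, θ a b → Θ a b) →
      (∃ a b, Θ a b ∧ ¬ θ a b) → Θ c0 c1 := by
    rintro Θ hΘ hsub ⟨a, b, hab, hnab⟩
    by_contra h01
    have hmem : {p : C.carrier × C.carrier | Θ p.1 p.2} ∈ F :=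
      ⟨hΘ, fun a b h => hsub a b (hMmax.1.2.1 a b h), h01⟩
    have hle : M ⊆ {p : C.carrier × C.carrier | Θ p.1 p.2} := fun p hp => hsub p.1 p.2 hp
    exact hnab (hMmax.2 hmem hle hab)
  -- the quotient algebra D
  set D := quotAlg C hθ with hDdef
  set q : C.carrier → D.carrier := Quotient.mk (congSetoid C hθ) with hqdef
  have hq : IsHom C D q := quot_mk_isHom C hθ
  have hD : D ∈ K := hK.hom_closed C hC D ⟨q, hq, fun d => ⟨d.out, d.out_eq⟩⟩
  have hDsimple : IsSimpleAlg D := by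
    constructor
    · exact ⟨q c0, q c1, fun h => hθ01 (Quotient.exact h)⟩
    · intro Ψ hΨ
      have hΘcong : IsCong C (fun a b => Ψ (q a) (q b)) := by
        refine ⟨⟨fun a => hΨ.1.refl _, fun h => hΨ.1.symm h, fun h h' => hΨ.1.trans h h'⟩, ?_⟩
        intro op v w h
        have e1 : q (C.interp op v) = D.interp op (fun i => q (v i)) := hq op v
        have e2 : q (C.interp op w) = D.interp op (fun i => q (w i)) := hq op w
        rw [e1, e2]
        exact hΨ.2 op _ _ h
      have hsub : ∀ a b, θ a b → Ψ (q a) (q b) := by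
        intro a b h
        have hqq : q a = q b := Quotient.sound h
        rw [hqq]; exact hΨ.1.refl _
      by_cases hΔ : ∀ a b, Ψ (q a) (q b) → θ a b
      · left
        intro a b
        constructor
        · refine fun hab => ?_
          revert hab
          refine Quotient.inductionOn₂ a b ?_
          intro x y h
          exact Quotient.sound (hΔ x y h)
        · rintro rfl; exact hΨ.1.refl _
      · right
        push_neg at hΔ
        obtain ⟨a, b, hab, hnab⟩ := hΔ
        have h01 : Ψ (q c0) (q c1) := hmaxθ _ hΘcong (fun a b h => hsub a b h) ⟨a, b, hab, hnab⟩
        let E := quotAlg D hΨ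
        let qE : D.carrier → E.carrier := Quotient.mk (congSetoid D hΨ)
        have hqE : IsHom D E qE := quot_mk_isHom D hΨ
        have hE : E ∈ K := hK.hom_closed D hD E ⟨qE, hqE, fun e => ⟨e.out, e.out_eq⟩⟩
        have hcomp : IsHom C E (fun a => qE (q a)) := isHom_comp hq hqE
        have h0 : qE (q c0) = E.interp z (fun i => Fin.elim0 (hz ▸ i)) := isHom_const hcomp hz _ _
        have h1 : qE (q c1) = E.interp o (fun i => Fin.elim0 (ho ▸ i)) := isHom_const hcomp ho _ _
        have heq : E.interp z (fun i => Fin.elim0 (hz ▸ i)) = E.interp o (fun i => Fin.elim0 (ho ▸ i)) := by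
          rw [← h0, ← h1]; exact Quotient.sound h01
        have hsubs : Subsingleton E.carrier := by
          rw [← not_nontrivial_iff_subsingleton]
          intro hnt
          exact hdist E hE hnt heq
        intro x y
        exact Quotient.exact (@Subsingleton.elim _ hsubs (qE x) (qE y))
  obtain ⟨m, hminj, hmhom⟩ := hIemb D hD hDsimple
  have hφ : IsHom C I (fun a => m (q a)) := isHom_comp hq hmhom
  let pfn : TA.carrier → I.carrier := fun t => m (q t.1)
  have hpfn : IsHom TA I pfn := by
    intro op v
    exact hφ op (fun i => (v i).1)
  have hW : IsSubalg I (Set.range pfn) := by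
    intro op v hv
    choose u hu using hv
    exact ⟨TA.interp op u, by rw [hpfn op u]; exact congrArg _ (funext hu)⟩
  let ψ : (I.sub (Set.range pfn) hW).carrier → I.carrier := fun a => g' (Classical.choose a.2)
  have ψspec : ∀ (a : (I.sub (Set.range pfn) hW).carrier) (t : TA.carrier),
      pfn t = a.1 → ψ a = g' t := by
    intro a t ht
    have h1 : pfn (Classical.choose a.2) = pfn t := (Classical.choose_spec a.2).trans ht.symm
    have h2 : θ (Classical.choose a.2).1 t.1 := Quotient.exact (hminj h1)
    exact hθT _ _ h2
  have hψ : IsHom (I.sub (Set.range pfn) hW) I ψ := by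
    intro op v
    have hu : ∀ i, pfn (Classical.choose (v i).2) = (v i).1 := fun i => Classical.choose_spec (v i).2
    have h1 : pfn (TA.interp op fun i => Classical.choose (v i).2)
        = ((I.sub (Set.range pfn) hW).interp op v).1 := by
      rw [hpfn op]; exact congrArg _ (funext hu)
    rw [ψspec _ _ h1, hg' op]
    rfl
  obtain ⟨G, hG, hGext⟩ := hself (Set.range pfn) hW ψ hψ
  refine ⟨fun a => G (m (q a)), isHom_comp hφ hG, ?_⟩
  funext b
  show G (m (q (f b))) = g b
  have hmem : m (q (f b)) ∈ Set.range pfn := ⟨⟨f b, ⟨b, rfl⟩⟩, rfl⟩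
  rw [hGext ⟨m (q (f b)), hmem⟩, ψspec ⟨m (q (f b)), hmem⟩ ⟨f b, ⟨b, rfl⟩⟩ rfl]
  exact gspec _ b rfl
end

section
/- A PMV-algebra (product MV-algebra) has the same congruences as its MV-algebra reduct: for every PMV-algebra A, the lattice of PMV-congruences of A equals the lattice of MV-congruences of A. Hence PMV-algebras form a compatible expansion of MV-algebras. -/
/-- A PMV-algebra: an MV-algebra with a product • such that ⟨A,•,1⟩ is an abelian
monoid and x•(y ⊙ ¬z) = (x•y) ⊙ ¬(x•z). -/
def IsPMVAlgebra {α : Type*} (M : MVOps α) (p : α → α → α) : Prop :=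
  IsMVAlgebra M ∧
  (∀ x y, p x y = p y x) ∧
  (∀ x y z, p (p x y) z = p x (p y z)) ∧
  (∀ x, p x M.one = x) ∧
  (∀ x y z, p x (M.odot y (M.neg z)) = M.odot (p x y) (M.neg (p x z)))

/-- A PMV-congruence: an MV-congruence also compatible with •. -/
def IsPMVCong {α : Type*} (M : MVOps α) (p : α → α → α) (r : α → α → Prop) : Prop :=
  IsMVCong M r ∧ ∀ a b c d, r a b → r c d → r (p a c) (p b d)

/-- a PMV-algebra has the same congruences as its MV-reduct; hence
PMV-algebras form a compatible expansion of MV-algebras. -/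
theorem pmv_congruences_eq_mv_congruences {α : Type*} (M : MVOps α) (p : α → α → α)
    (h : IsPMVAlgebra M p) :
    {r : α → α → Prop | IsPMVCong M p r} = {r : α → α → Prop | IsMVCong M r} := by
  obtain ⟨hmv, pcomm, passoc, pone, pdist⟩ := h
  ext r
  simp only [Set.mem_setOf_eq]
  constructor
  · exact fun h => h.1
  · intro hr
    refine ⟨hr, ?_⟩
    obtain ⟨heq, cm, cj, co, ci⟩ := hr
    simp only [MVOps.neg] at pdist
    -- basic MV facts
    have one_odot : ∀ x, M.odot M.one x = x := fun x => by
      rw [hmv.odot_comm]; exact hmv.odot_one x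
    have meet_idem : ∀ x, M.meet x x = x := fun x => by
      have h1 := hmv.absorb_meet_join x (M.meet x x)
      rwa [hmv.absorb_join_meet] at h1
    have meet_zero' : ∀ x, M.meet M.zero x = M.zero := fun x => by
      have h1 := hmv.absorb_meet_join M.zero x
      rwa [hmv.join_comm, hmv.join_zero] at h1
    have meet_zero : ∀ x, M.meet x M.zero = M.zero := fun x => by
      rw [hmv.meet_comm]; exact meet_zero' x
    have neg_one : M.impl M.one M.zero = M.zero := by
      have h1 := hmv.ax6 M.one M.zero
      rwa [one_odot, meet_zero] at h1
    have implzz : M.impl M.zero M.zero = M.one := by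
      have h1 := hmv.ax8 M.one
      rwa [neg_one] at h1
    have impl_one : ∀ x, M.impl x M.one = M.one := fun x => by
      have h1 := hmv.ax5 x M.one
      rwa [hmv.meet_one] at h1
    have odot_zero : ∀ x, M.odot x M.zero = M.zero := fun x => by
      have h1 : M.impl (M.odot x M.zero) M.zero = M.one := by
        rw [hmv.impl_odot, implzz]; exact impl_one x
      have h2 := hmv.ax8 (M.odot x M.zero)
      rw [h1, neg_one] at h2
      exact h2.symm
    have impl_self : ∀ x, M.impl x x = M.one := fun x => by
      have h1 := hmv.ax5 x x
      rwa [meet_idem] at h1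
    have le_odot_neg : ∀ z y, M.impl z y = M.one →
        M.odot z (M.impl y M.zero) = M.zero := by
      intro z y hzy
      have h1 : M.impl (M.odot z (M.impl y M.zero)) M.zero = M.one := by
        rw [hmv.impl_odot, hmv.ax8, hzy]
      have h2 := hmv.ax8 (M.odot z (M.impl y M.zero))
      rw [h1, neg_one] at h2
      exact h2.symm
    have odot_neg_self : ∀ x, M.odot x (M.impl x M.zero) = M.zero :=
      fun x => le_odot_neg x x (impl_self x)
    have le_of_odot_neg : ∀ m u, M.odot m (M.impl u M.zero) = M.zero →
        M.meet m u = m := by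
      intro m u hmu
      have h2 := hmv.impl_odot m (M.impl u M.zero) M.zero
      rw [hmv.ax8, hmu, implzz] at h2
      have h3 := hmv.ax6 m u
      rw [← h2, hmv.odot_one] at h3
      exact h3.symm
    -- PMV facts
    have p_zero : ∀ x, p x M.zero = M.zero := fun x => by
      have h1 := pdist x M.one M.one
      rwa [pone, neg_one, odot_zero, odot_neg_self] at h1
    have p_le : ∀ z c, M.odot (p z c) (M.impl z M.zero) = M.zero := by
      intro z c
      have h1 := pdist z c M.one
      rw [pone, neg_one, odot_zero, p_zero] at h1
      exact h1.symm
    -- the key "absorption" identity: x ∧ (y ⊕ (x ⊙ ¬y)) = x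
    set opl : α → α → α :=
      fun a b => M.impl (M.odot (M.impl a M.zero) (M.impl b M.zero)) M.zero with hopl
    have opl_zero : ∀ y, opl y M.zero = y := fun y => by
      rw [hopl]; simp only
      rw [implzz, hmv.odot_one, hmv.ax8]
    have absorb_key : ∀ x y,
        M.meet x (opl y (M.odot x (M.impl y M.zero))) = x := by
      intro x y
      have hu : M.impl (M.odot x (M.impl y M.zero)) M.zero = M.impl x y := by
        rw [hmv.impl_odot, hmv.ax8]
      have hxs : M.odot x (M.odot (M.impl y M.zero)
          (M.impl (M.odot x (M.impl y M.zero)) M.zero)) = M.zero := by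
        rw [hu, ← hmv.odot_assoc, hmv.odot_comm x (M.impl y M.zero),
          hmv.odot_assoc, hmv.ax6, hmv.odot_comm]
        exact le_odot_neg _ _ (hmv.ax5 x y)
      have himpl : M.impl x (opl y (M.odot x (M.impl y M.zero))) = M.one := by
        rw [hopl]; simp only
        rw [← hmv.impl_odot, hxs, implzz]
      have h1 := hmv.ax6 x (opl y (M.odot x (M.impl y M.zero)))
      rw [himpl, hmv.odot_one] at h1
      exact h1.symm
    -- congruence machinery
    have copl : ∀ a b c d, r a b → r c d → r (opl a c) (opl b d) := by
      intro a b c d hab hcd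
      exact ci _ _ _ _ (co _ _ _ _ (ci _ _ _ _ hab (heq.refl _))
        (ci _ _ _ _ hcd (heq.refl _))) (heq.refl _)
    have rsub : ∀ x y, r x y → r (M.odot x (M.impl y M.zero)) M.zero := by
      intro x y hxy
      have h1 := co _ _ _ _ hxy (heq.refl (M.impl y M.zero))
      rwa [odot_neg_self y] at h1
    have rzero_of_le : ∀ m u, M.odot m (M.impl u M.zero) = M.zero →
        r u M.zero → r m M.zero := by
      intro m u hle hu
      have h1 := cm _ _ _ _ (heq.refl m) hu
      rwa [le_of_odot_neg m u hle, meet_zero] at h1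
    have pcompat1 : ∀ z x y, r x y → r (p z x) (p z y) := by
      intro z x y hxy
      have hU : r (M.odot (p z x) (M.impl (p z y) M.zero)) M.zero := by
        have h1 : r (p z (M.odot x (M.impl y M.zero))) M.zero := by
          refine rzero_of_le _ (M.odot x (M.impl y M.zero)) ?_ (rsub x y hxy)
          rw [pcomm]; exact p_le _ z
        rwa [pdist z x y] at h1
      have hV : r (M.odot (p z y) (M.impl (p z x) M.zero)) M.zero := by
        have h1 : r (p z (M.odot y (M.impl x M.zero))) M.zero := by
          refine rzero_of_le _ (M.odot y (M.impl x M.zero)) ?_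
            (rsub y x (heq.symm hxy))
          rw [pcomm]; exact p_le _ z
        rwa [pdist z y x] at h1
      have h3 : r (p z x) (M.meet (p z x) (p z y)) := by
        have h2 : r (opl (p z y)
            (M.odot (p z x) (M.impl (p z y) M.zero))) (p z y) := by
          have h0 := copl (p z y) (p z y) _ M.zero (heq.refl _) hU
          rwa [opl_zero] at h0
        have h1 := cm _ _ _ _ (heq.refl (p z x)) h2
        rwa [absorb_key (p z x) (p z y)] at h1
      have h4 : r (p z y) (M.meet (p z x) (p z y)) := by
        have h2 : r (opl (p z x)
            (M.odot (p z y) (M.impl (p z x) M.zero))) (p z x) := by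
          have h0 := copl (p z x) (p z x) _ M.zero (heq.refl _) hV
          rwa [opl_zero] at h0
        have h1 := cm _ _ _ _ (heq.refl (p z y)) h2
        rw [absorb_key (p z y) (p z x)] at h1
        rwa [hmv.meet_comm] at h1
      exact heq.trans h3 (heq.symm h4)
    intro a b c d hab hcd
    have h1 : r (p a c) (p b c) := by
      rw [pcomm a c, pcomm b c]; exact pcompat1 c a b hab
    exact heq.trans h1 (pcompat1 b c d hcd)
end

section
/- On a semisimple MV-algebra A there is at most one binary operation • making A into a PMV-algebra. In particular, ordinary multiplication is the unique product operation making [0,1]_MV into a PMV-algebra. -/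
/-- A maximal MV-congruence: a proper congruence such that every congruence properly
containing it is the full relation. -/
def IsMaximalMVCong {α : Type*} (M : MVOps α) (r : α → α → Prop) : Prop :=
  IsMVCong M r ∧ ¬ (∀ x y, r x y) ∧
  ∀ r' : α → α → Prop, IsMVCong M r' → (∀ x y, r x y → r' x y) →
    (∀ x y, r' x y ↔ r x y) ∨ (∀ x y, r' x y)

/-- A semisimple MV-algebra: the intersection of the maximal congruences is trivial. -/
def IsSemisimpleMV {α : Type*} (M : MVOps α) : Prop :=
  IsMVAlgebra M ∧
  ∀ x y, (∀ r : α → α → Prop, IsMaximalMVCong M r → r x y) → x = y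

set_option linter.unusedSectionVars false
namespace MVLib

variable {α : Type*}

/-- order -/
def _root_.MVOps.le_s11 (M : MVOps α) (a b : α) : Prop := M.impl a b = M.one
/-- truncated subtraction a ⊖ b = a ⊙ ¬b -/
def _root_.MVOps.sub (M : MVOps α) (a b : α) : α := M.odot a (M.neg b)
/-- Chang distance -/
def _root_.MVOps.d (M : MVOps α) (a b : α) : α := M.oplus (M.sub a b) (M.sub b a)

section Basic
variable {M : MVOps α} (h : IsMVAlgebra M)
include h

lemma meet_idem (x : α) : M.meet x x = x := by
  nth_rewrite 2 [← h.absorb_join_meet x x]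
  rw [h.absorb_meet_join]

lemma join_idem (x : α) : M.join x x = x := by
  nth_rewrite 2 [← h.absorb_meet_join x x]
  rw [h.absorb_join_meet]

lemma one_odot (x : α) : M.odot M.one x = x := by rw [h.odot_comm, h.odot_one]

lemma one_impl (x : α) : M.impl M.one x = x := by
  have h6 := h.ax6 M.one x
  rw [one_odot h, h.meet_comm, h.meet_one] at h6
  exact h6

lemma impl_self (x : α) : M.impl x x = M.one := by
  have := h.ax5 x x
  rwa [meet_idem h] at this

lemma impl_one (x : α) : M.impl x M.one = M.one := by
  have := h.ax5 x M.one
  rwa [h.meet_one] at this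

lemma neg_one : M.neg M.one = M.zero := by
  show M.impl M.one M.zero = M.zero
  rw [one_impl h]

lemma neg_neg (x : α) : M.neg (M.neg x) = x := h.ax8 x

lemma neg_zero : M.neg M.zero = M.one := by
  have := h.ax8 M.one
  rwa [show M.impl M.one M.zero = M.zero from one_impl h _] at this

lemma le_iff_meet {a b : α} : M.le_s11 a b ↔ M.meet a b = a := by
  constructor
  · intro H
    have h6 := h.ax6 a b
    rw [H, h.odot_one] at h6
    exact h6.symm
  · intro H
    have := h.ax5 a b
    rwa [H] at this

lemma le_refl (a : α) : M.le_s11 a a := impl_self h a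

lemma le_trans {a b c : α} (hab : M.le_s11 a b) (hbc : M.le_s11 b c) : M.le_s11 a c := by
  rw [le_iff_meet h] at *
  calc M.meet a c = M.meet (M.meet a b) c := by rw [hab]
    _ = M.meet a (M.meet b c) := h.meet_assoc a b c
    _ = M.meet a b := by rw [hbc]
    _ = a := hab

lemma le_antisymm {a b : α} (hab : M.le_s11 a b) (hba : M.le_s11 b a) : a = b := by
  rw [le_iff_meet h] at *
  rw [← hab, h.meet_comm, hba]

lemma meet_le_left (a b : α) : M.le_s11 (M.meet a b) a := by
  have := h.ax5 b a
  rwa [h.meet_comm] at this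

lemma meet_le_right (a b : α) : M.le_s11 (M.meet a b) b := h.ax5 a b

lemma le_meet {a b c : α} (hca : M.le_s11 c a) (hcb : M.le_s11 c b) : M.le_s11 c (M.meet a b) := by
  rw [le_iff_meet h] at *
  calc M.meet c (M.meet a b) = M.meet (M.meet c a) b := (h.meet_assoc c a b).symm
    _ = M.meet c b := by rw [hca]
    _ = c := hcb

lemma le_iff_join {a b : α} : M.le_s11 a b ↔ M.join a b = b := by
  rw [le_iff_meet h]
  constructor
  · intro H
    have := h.absorb_join_meet b a
    rw [h.meet_comm b a, H] at this
    rw [h.join_comm]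
    exact this
  · intro H
    have := h.absorb_meet_join a b
    rwa [H] at this

lemma le_join_left (a b : α) : M.le_s11 a (M.join a b) := by
  rw [le_iff_meet h]; exact h.absorb_meet_join a b

lemma le_join_right (a b : α) : M.le_s11 b (M.join a b) := by
  rw [le_iff_meet h, h.join_comm]; exact h.absorb_meet_join b a

lemma join_le {a b c : α} (hac : M.le_s11 a c) (hbc : M.le_s11 b c) : M.le_s11 (M.join a b) c := by
  rw [le_iff_join h] at *
  calc M.join (M.join a b) c = M.join a (M.join b c) := h.join_assoc a b c
    _ = M.join a c := by rw [hbc]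
    _ = c := hac

lemma impl_eq (x y : α) : M.impl x y = M.neg (M.odot x (M.neg y)) := by
  show _ = M.impl (M.odot x (M.neg y)) M.zero
  rw [h.impl_odot]
  show M.impl x y = M.impl x (M.neg (M.neg y))
  rw [neg_neg h]

lemma contrapos (x y : α) : M.impl x y = M.impl (M.neg y) (M.neg x) := by
  rw [impl_eq h (M.neg y) (M.neg x), neg_neg h, h.odot_comm, ← impl_eq h]

lemma le_one (a : α) : M.le_s11 a M.one := impl_one h a

lemma zero_le (a : α) : M.le_s11 M.zero a := by
  show M.impl M.zero a = M.one
  rw [contrapos h, neg_zero h, impl_one h]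

lemma le_impl_odot (b c : α) : M.le_s11 b (M.impl c (M.odot b c)) := by
  have := impl_self h (M.odot b c)
  rw [show M.odot b c = M.odot b c from rfl] at this
  have h2 : M.impl (M.odot b c) (M.odot b c) = M.impl b (M.impl c (M.odot b c)) := h.impl_odot b c _
  show M.impl b (M.impl c (M.odot b c)) = M.one
  rw [← h2, impl_self h]

lemma odot_le_odot_left {a b : α} (hab : M.le_s11 a b) (c : α) :
    M.le_s11 (M.odot a c) (M.odot b c) := by
  have key : M.le_s11 a (M.impl c (M.odot b c)) := le_trans h hab (le_impl_odot h b c)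
  show M.impl (M.odot a c) (M.odot b c) = M.one
  rw [h.impl_odot]
  exact key

lemma odot_le_odot {a b c d : α} (hab : M.le_s11 a b) (hcd : M.le_s11 c d) :
    M.le_s11 (M.odot a c) (M.odot b d) := by
  have h1 := odot_le_odot_left h hab c
  have h2 : M.le_s11 (M.odot b c) (M.odot b d) := by
    rw [h.odot_comm b c, h.odot_comm b d]
    exact odot_le_odot_left h hcd b
  exact le_trans h h1 h2

lemma odot_le_left (a b : α) : M.le_s11 (M.odot a b) a := by
  have := odot_le_odot h (le_refl h a) (le_one h b)
  rwa [h.odot_one] at this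

lemma odot_le_right (a b : α) : M.le_s11 (M.odot a b) b := by
  rw [h.odot_comm]; exact odot_le_left h b a

lemma neg_le_neg {a b : α} (hab : M.le_s11 a b) : M.le_s11 (M.neg b) (M.neg a) := by
  show M.impl (M.neg b) (M.neg a) = M.one
  rw [← contrapos h]
  exact hab

lemma impl_le_impl_right {u v : α} (huv : M.le_s11 u v) (w : α) :
    M.le_s11 (M.impl w u) (M.impl w v) := by
  rw [impl_eq h w u, impl_eq h w v]
  exact neg_le_neg h (odot_le_odot h (le_refl h w) (neg_le_neg h huv))

lemma odot_le_iff {a b c : α} : M.le_s11 (M.odot a b) c ↔ M.le_s11 a (M.impl b c) := by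
  constructor
  · intro H
    exact le_trans h (le_impl_odot h a b) (impl_le_impl_right h H b)
  · intro H
    have h1 : M.le_s11 (M.odot a b) (M.odot (M.impl b c) b) := odot_le_odot_left h H b
    have h2 : M.odot (M.impl b c) b = M.meet b c := by
      rw [h.odot_comm]; exact h.ax6 b c
    rw [h2] at h1
    exact le_trans h h1 (meet_le_right h b c)

lemma odot_zero (a : α) : M.odot a M.zero = M.zero := by
  apply le_antisymm h
  · have : M.le_s11 (M.odot a M.zero) (M.odot M.one M.zero) :=
      odot_le_odot h (le_one h a) (le_refl h M.zero)
    rwa [one_odot h] at this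
  · exact zero_le h _

lemma zero_odot (a : α) : M.odot M.zero a = M.zero := by rw [h.odot_comm]; exact odot_zero h a

lemma odot_neg_self (a : α) : M.odot a (M.neg a) = M.zero := by
  apply le_antisymm h _ (zero_le h _)
  rw [odot_le_iff h]
  show M.le_s11 a (M.neg (M.neg a))
  rw [neg_neg h]
  exact le_refl h a

end Basic
end MVLib
set_option linter.unusedSectionVars false
namespace MVLib
section Basic2
variable {α : Type*} {M : MVOps α} (h : IsMVAlgebra M)
include h

lemma oplus_comm (a b : α) : M.oplus a b = M.oplus b a := by
  show M.neg _ = M.neg _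
  rw [h.odot_comm]

lemma oplus_assoc (a b c : α) : M.oplus (M.oplus a b) c = M.oplus a (M.oplus b c) := by
  show M.neg (M.odot (M.neg (M.neg (M.odot (M.neg a) (M.neg b)))) (M.neg c))
     = M.neg (M.odot (M.neg a) (M.neg (M.neg (M.odot (M.neg b) (M.neg c)))))
  rw [neg_neg h, neg_neg h, h.odot_assoc]

lemma oplus_zero (a : α) : M.oplus a M.zero = a := by
  show M.neg (M.odot (M.neg a) (M.neg M.zero)) = a
  rw [neg_zero h, h.odot_one, neg_neg h]

lemma zero_oplus (a : α) : M.oplus M.zero a = a := by rw [oplus_comm h, oplus_zero h]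

lemma oplus_one (a : α) : M.oplus a M.one = M.one := by
  show M.neg (M.odot (M.neg a) (M.neg M.one)) = M.one
  rw [neg_one h, odot_zero h, neg_zero h]

lemma one_oplus (a : α) : M.oplus M.one a = M.one := by rw [oplus_comm h, oplus_one h]

lemma oplus_le_oplus {a b c d : α} (hab : M.le_s11 a b) (hcd : M.le_s11 c d) :
    M.le_s11 (M.oplus a c) (M.oplus b d) := by
  exact neg_le_neg h (odot_le_odot h (neg_le_neg h hab) (neg_le_neg h hcd))

lemma le_oplus_left (a b : α) : M.le_s11 a (M.oplus a b) := by
  have := oplus_le_oplus h (le_refl h a) (zero_le h b)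
  rwa [oplus_zero h] at this

lemma le_oplus_right (a b : α) : M.le_s11 b (M.oplus a b) := by
  rw [oplus_comm h]; exact le_oplus_left h b a

lemma neg_oplus (a b : α) : M.neg (M.oplus a b) = M.odot (M.neg a) (M.neg b) := by
  show M.neg (M.neg _) = _
  rw [neg_neg h]

lemma oplus_neg_neg (a b : α) : M.oplus (M.neg a) (M.neg b) = M.neg (M.odot a b) := by
  show M.neg (M.odot (M.neg (M.neg a)) (M.neg (M.neg b))) = _
  rw [neg_neg h, neg_neg h]

lemma le_neg_iff {a b : α} : M.le_s11 a (M.neg b) ↔ M.le_s11 b (M.neg a) := by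
  constructor <;> intro H
  · have := neg_le_neg h H
    rw [neg_neg h] at this
    exact this
  · have := neg_le_neg h H
    rw [neg_neg h] at this
    exact this

lemma neg_le_iff {a b : α} : M.le_s11 (M.neg a) b ↔ M.le_s11 (M.neg b) a := by
  rw [show b = M.neg (M.neg b) from (neg_neg h b).symm, le_neg_iff h, neg_neg h, neg_neg h]

lemma neg_meet (a b : α) : M.neg (M.meet a b) = M.join (M.neg a) (M.neg b) := by
  apply le_antisymm h
  · rw [neg_le_iff h]
    apply le_meet h
    · rw [show a = M.neg (M.neg a) from (neg_neg h a).symm, ← neg_le_iff h, neg_neg h]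
      exact le_join_left h _ _
    · rw [show b = M.neg (M.neg b) from (neg_neg h b).symm, ← neg_le_iff h, neg_neg h]
      exact le_join_right h _ _
  · exact join_le h (neg_le_neg h (meet_le_left h a b)) (neg_le_neg h (meet_le_right h a b))

lemma neg_join (a b : α) : M.neg (M.join a b) = M.meet (M.neg a) (M.neg b) := by
  have := neg_meet h (M.neg a) (M.neg b)
  rw [neg_neg h, neg_neg h] at this
  rw [← this, neg_neg h]

lemma odot_join (c a b : α) : M.odot c (M.join a b) = M.join (M.odot c a) (M.odot c b) := by
  apply le_antisymm h
  · have : M.le_s11 (M.odot (M.join a b) c) (M.join (M.odot c a) (M.odot c b)) := by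
      rw [odot_le_iff h]
      apply join_le h
      · rw [← odot_le_iff h, h.odot_comm]
        exact le_join_left h _ _
      · rw [← odot_le_iff h, h.odot_comm]
        exact le_join_right h _ _
    rwa [h.odot_comm] at this
  · exact join_le h (odot_le_odot h (le_refl h c) (le_join_left h a b))
      (odot_le_odot h (le_refl h c) (le_join_right h a b))

lemma join_odot (c a b : α) : M.odot (M.join a b) c = M.join (M.odot a c) (M.odot b c) := by
  rw [h.odot_comm, odot_join h, h.odot_comm c a, h.odot_comm c b]

end Basic2
end MVLib
set_option linter.unusedSectionVars false
namespace MVLib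
section Sub
variable {α : Type*} {M : MVOps α} (h : IsMVAlgebra M)
include h

lemma sub_le_iff {a c v : α} : M.le_s11 (M.sub a c) v ↔ M.le_s11 a (M.oplus c v) := by
  show M.le_s11 (M.odot a (M.neg c)) v ↔ _
  rw [odot_le_iff h]
  have : M.impl (M.neg c) v = M.oplus c v := by
    rw [impl_eq h]
    show M.neg (M.odot (M.neg c) (M.neg v)) = M.oplus c v
    rfl
  rw [this]

lemma sub_le_self (a b : α) : M.le_s11 (M.sub a b) a := odot_le_left h _ _

lemma sub_le_sub {a a' b b' : α} (ha : M.le_s11 a a') (hb : M.le_s11 b' b) :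
    M.le_s11 (M.sub a b) (M.sub a' b') :=
  odot_le_odot h ha (neg_le_neg h hb)

lemma le_iff_sub_zero {a b : α} : M.le_s11 a b ↔ M.sub a b = M.zero := by
  constructor
  · intro H
    apply le_antisymm h _ (zero_le h _)
    show M.le_s11 (M.odot a (M.neg b)) M.zero
    rw [odot_le_iff h]
    have : M.impl (M.neg b) M.zero = M.neg (M.neg b) := rfl
    rw [this, neg_neg h]
    exact H
  · intro H
    have this1 : M.le_s11 (M.odot a (M.neg b)) M.zero := by
      show M.le_s11 (M.sub a b) M.zero
      rw [H]; exact le_refl h _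
    rw [odot_le_iff h] at this1
    have e : M.impl (M.neg b) M.zero = M.neg (M.neg b) := rfl
    rwa [e, neg_neg h] at this1

lemma sub_self (a : α) : M.sub a a = M.zero := (le_iff_sub_zero h).mp (le_refl h a)

lemma sub_zero (a : α) : M.sub a M.zero = a := by
  show M.odot a (M.neg M.zero) = a
  rw [neg_zero h, h.odot_one]

lemma zero_sub (a : α) : M.sub M.zero a = M.zero := zero_odot h _

lemma sub_odot_cancel (a b : α) : M.odot (M.sub a b) b = M.zero := by
  show M.odot (M.odot a (M.neg b)) b = M.zero
  rw [h.odot_assoc, h.odot_comm (M.neg b) b, odot_neg_self h, odot_zero h]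

lemma neg_impl (x y : α) : M.neg (M.impl x y) = M.sub x y := by
  rw [impl_eq h, neg_neg h]; rfl

lemma oplus_sub_join (x y : α) : M.oplus x (M.sub y x) = M.join y x := by
  show M.neg (M.odot (M.neg x) (M.neg (M.odot y (M.neg x)))) = M.join y x
  have e1 : M.neg (M.odot y (M.neg x)) = M.impl y x := by
    rw [impl_eq h]
  rw [e1]
  have e2 : M.impl y x = M.impl (M.neg x) (M.neg y) := contrapos h y x
  rw [e2, h.ax6, neg_meet h, neg_neg h, neg_neg h]
  exact h.join_comm x y

lemma sub_oplus_meet (a b : α) : M.sub (M.oplus a b) b = M.meet a (M.neg b) := by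
  show M.odot (M.neg (M.odot (M.neg a) (M.neg b))) (M.neg b) = _
  rw [h.odot_comm]
  have e1 : M.neg (M.odot (M.neg a) (M.neg b)) = M.impl (M.neg b) a := by
    rw [impl_eq h]
    exact congrArg M.neg (h.odot_comm _ _)
  rw [e1, h.ax6, h.meet_comm]

lemma sub_sub_meet (a b : α) : M.sub a (M.sub a b) = M.meet a b := by
  show M.odot a (M.neg (M.odot a (M.neg b))) = _
  have e1 : M.neg (M.odot a (M.neg b)) = M.impl a b := by rw [impl_eq h]
  rw [e1, h.ax6]

lemma disj_iff {a b : α} : M.odot a b = M.zero ↔ M.le_s11 a (M.neg b) := by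
  constructor
  · intro hd
    have h1 : M.le_s11 (M.odot a b) M.zero := by rw [hd]; exact le_refl h _
    rw [odot_le_iff h] at h1
    exact h1
  · intro H
    apply le_antisymm h _ (zero_le h _)
    rw [odot_le_iff h]
    exact H

lemma sub_oplus_of_disj {a b : α} (hd : M.odot a b = M.zero) : M.sub (M.oplus a b) b = a := by
  rw [sub_oplus_meet h]
  exact (le_iff_meet h).mp ((disj_iff h).mp hd)

lemma sub_sub (a b c : α) : M.sub (M.sub a b) c = M.sub a (M.oplus b c) := by
  show M.odot (M.odot a (M.neg b)) (M.neg c) = M.odot a (M.neg (M.oplus b c))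
  rw [neg_oplus h, h.odot_assoc]

lemma join_le_oplus (a b : α) : M.le_s11 (M.join a b) (M.oplus a b) :=
  join_le h (le_oplus_left h a b) (le_oplus_right h a b)

lemma le_oplus_sub (a b : α) : M.le_s11 a (M.oplus b (M.sub a b)) := by
  rw [oplus_sub_join h]
  exact le_join_left h a b

lemma oplus_sub_le (a b c : α) : M.le_s11 (M.sub (M.oplus a b) c) (M.oplus a (M.sub b c)) := by
  rw [sub_le_iff h, oplus_comm h c]
  have : M.le_s11 (M.oplus a b) (M.oplus a (M.oplus (M.sub b c) c)) := by
    apply oplus_le_oplus h (le_refl h a)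
    rw [oplus_comm h _ c, oplus_sub_join h]
    exact le_join_left h b c
  rwa [← oplus_assoc h] at this

lemma odot_oplus_le (c b v : α) : M.le_s11 (M.odot c (M.oplus b v)) (M.oplus (M.odot c b) v) := by
  have h1 : M.le_s11 (M.sub (M.odot c (M.oplus b v)) v) (M.odot c b) := by
    have e : M.sub (M.odot c (M.oplus b v)) v = M.odot c (M.sub (M.oplus b v) v) := by
      show M.odot (M.odot c (M.oplus b v)) (M.neg v) = _
      rw [h.odot_assoc]; rfl
    rw [e, sub_oplus_meet h]
    exact odot_le_odot h (le_refl h c) (meet_le_left h b _)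
  rw [sub_le_iff h] at h1
  rwa [oplus_comm h v] at h1

end Sub
end MVLib
set_option linter.unusedSectionVars false
namespace MVLib
section DLem
variable {α : Type*} {M : MVOps α} (h : IsMVAlgebra M)
include h

lemma oplus_oplus_comm (a b c d : α) :
    M.oplus (M.oplus a b) (M.oplus c d) = M.oplus (M.oplus a c) (M.oplus b d) := by
  rw [oplus_assoc h, oplus_assoc h]
  apply congrArg
  rw [← oplus_assoc h, ← oplus_assoc h, oplus_comm h b c]

lemma d_self (x : α) : M.d x x = M.zero := by
  show M.oplus (M.sub x x) (M.sub x x) = M.zero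
  rw [sub_self h, oplus_zero h]

lemma d_comm (x y : α) : M.d x y = M.d y x := oplus_comm h _ _

lemma oplus_eq_zero {a b : α} (H : M.oplus a b = M.zero) : a = M.zero := by
  apply le_antisymm h _ (zero_le h _)
  have := le_oplus_left h a b
  rwa [H] at this

lemma eq_of_d_zero {x y : α} (H : M.d x y = M.zero) : x = y := by
  have h1 : M.sub x y = M.zero := oplus_eq_zero h H
  have h2 : M.sub y x = M.zero := by
    rw [d_comm h] at H
    exact oplus_eq_zero h H
  exact le_antisymm h ((le_iff_sub_zero h).mpr h1) ((le_iff_sub_zero h).mpr h2)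

lemma d_zero (x : α) : M.d x M.zero = x := by
  show M.oplus (M.sub x M.zero) (M.sub M.zero x) = x
  rw [sub_zero h, zero_sub h, oplus_zero h]

lemma sub_triangle (x y z : α) : M.le_s11 (M.sub x z) (M.oplus (M.sub x y) (M.sub y z)) := by
  have h1 : M.le_s11 (M.sub x z) (M.sub (M.oplus (M.sub x y) y) z) := by
    apply sub_le_sub h _ (le_refl h z)
    have := le_oplus_sub h x y
    rwa [oplus_comm h y] at this
  exact le_trans h h1 (oplus_sub_le h _ _ _)

lemma d_triangle (x y z : α) : M.le_s11 (M.d x z) (M.oplus (M.d x y) (M.d y z)) := by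
  have h1 := sub_triangle h x y z
  have h2 := sub_triangle h z y x
  rw [oplus_comm h] at h2
  have h3 : M.le_s11 (M.d x z)
      (M.oplus (M.oplus (M.sub x y) (M.sub y z)) (M.oplus (M.sub y x) (M.sub z y))) :=
    oplus_le_oplus h h1 h2
  rw [oplus_oplus_comm h] at h3
  exact h3

lemma sub_oplus_compat (x a y b : α) :
    M.le_s11 (M.sub (M.oplus x a) (M.oplus y b)) (M.oplus (M.sub x y) (M.sub a b)) := by
  rw [sub_le_iff h]
  have h1 : M.le_s11 (M.oplus x a) (M.oplus (M.oplus y (M.sub x y)) (M.oplus b (M.sub a b))) := by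
    apply oplus_le_oplus h (le_oplus_sub h x y) (le_oplus_sub h a b)
  rwa [oplus_oplus_comm h] at h1

lemma sub_odot_compat (x a y b : α) :
    M.le_s11 (M.sub (M.odot x a) (M.odot y b)) (M.oplus (M.sub x y) (M.sub a b)) := by
  rw [sub_le_iff h]
  have h1 : M.le_s11 (M.odot x a) (M.odot (M.oplus y (M.sub x y)) (M.oplus b (M.sub a b))) :=
    odot_le_odot h (le_oplus_sub h x y) (le_oplus_sub h a b)
  have h2 : M.le_s11 (M.odot (M.oplus y (M.sub x y)) (M.oplus b (M.sub a b)))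
      (M.oplus (M.odot (M.oplus y (M.sub x y)) b) (M.sub a b)) := odot_oplus_le h _ _ _
  have h3 : M.le_s11 (M.odot (M.oplus y (M.sub x y)) b) (M.oplus (M.odot b y) (M.sub x y)) := by
    rw [h.odot_comm]
    exact odot_oplus_le h b y (M.sub x y)
  have h4 := le_trans h h1 (le_trans h h2 (oplus_le_oplus h h3 (le_refl h (M.sub a b))))
  rw [oplus_assoc h, h.odot_comm b y] at h4
  exact h4

lemma sub_meet_compat (x a y b : α) :
    M.le_s11 (M.sub (M.meet x a) (M.meet y b)) (M.oplus (M.sub x y) (M.sub a b)) := by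
  have e : M.sub (M.meet x a) (M.meet y b)
      = M.join (M.odot (M.meet x a) (M.neg y)) (M.odot (M.meet x a) (M.neg b)) := by
    show M.odot (M.meet x a) (M.neg (M.meet y b)) = _
    rw [neg_meet h, odot_join h]
  rw [e]
  apply join_le h
  · exact le_trans h (odot_le_odot h (meet_le_left h x a) (le_refl h _))
      (le_trans h (le_oplus_left h (M.sub x y) (M.sub a b)) (le_refl h _))
  · exact le_trans h (odot_le_odot h (meet_le_right h x a) (le_refl h _))
      (le_oplus_right h (M.sub x y) (M.sub a b))

lemma sub_join_compat (x a y b : α) :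
    M.le_s11 (M.sub (M.join x a) (M.join y b)) (M.oplus (M.sub x y) (M.sub a b)) := by
  have e : M.sub (M.join x a) (M.join y b)
      = M.join (M.odot x (M.neg (M.join y b))) (M.odot a (M.neg (M.join y b))) := by
    show M.odot (M.join x a) (M.neg (M.join y b)) = _
    rw [join_odot h]
  rw [e]
  apply join_le h
  · apply le_trans h (odot_le_odot h (le_refl h x) (neg_le_neg h (le_join_left h y b)))
    exact le_oplus_left h _ _
  · apply le_trans h (odot_le_odot h (le_refl h a) (neg_le_neg h (le_join_right h y b)))
    exact le_oplus_right h _ _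

lemma sub_neg_compat (x y : α) : M.sub (M.neg x) (M.neg y) = M.sub y x := by
  show M.odot (M.neg x) (M.neg (M.neg y)) = M.odot y (M.neg x)
  rw [neg_neg h, h.odot_comm]

lemma d_neg (x y : α) : M.d (M.neg x) (M.neg y) = M.d x y := by
  show M.oplus (M.sub (M.neg x) (M.neg y)) (M.sub (M.neg y) (M.neg x)) = _
  rw [sub_neg_compat h, sub_neg_compat h, oplus_comm h]
  rfl

lemma d_le_d_oplus (x a y b : α) :
    M.le_s11 (M.d (M.oplus x a) (M.oplus y b)) (M.oplus (M.d x y) (M.d a b)) := by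
  have h1 := sub_oplus_compat h x a y b
  have h2 := sub_oplus_compat h y b x a
  have h3 := oplus_le_oplus h h1 h2
  rw [oplus_oplus_comm h] at h3
  exact h3

lemma d_le_d_odot (x a y b : α) :
    M.le_s11 (M.d (M.odot x a) (M.odot y b)) (M.oplus (M.d x y) (M.d a b)) := by
  have h1 := sub_odot_compat h x a y b
  have h2 := sub_odot_compat h y b x a
  have h3 := oplus_le_oplus h h1 h2
  rw [oplus_oplus_comm h] at h3
  exact h3

lemma d_le_d_meet (x a y b : α) :
    M.le_s11 (M.d (M.meet x a) (M.meet y b)) (M.oplus (M.d x y) (M.d a b)) := by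
  have h1 := sub_meet_compat h x a y b
  have h2 := sub_meet_compat h y b x a
  have h3 := oplus_le_oplus h h1 h2
  rw [oplus_oplus_comm h] at h3
  exact h3

lemma d_le_d_join (x a y b : α) :
    M.le_s11 (M.d (M.join x a) (M.join y b)) (M.oplus (M.d x y) (M.d a b)) := by
  have h1 := sub_join_compat h x a y b
  have h2 := sub_join_compat h y b x a
  have h3 := oplus_le_oplus h h1 h2
  rw [oplus_oplus_comm h] at h3
  exact h3

lemma d_le_d_impl (x a y b : α) :
    M.le_s11 (M.d (M.impl x a) (M.impl y b)) (M.oplus (M.d x y) (M.d a b)) := by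
  have e1 : M.impl x a = M.neg (M.sub x a) := by rw [impl_eq h]; rfl
  have e2 : M.impl y b = M.neg (M.sub y b) := by rw [impl_eq h]; rfl
  rw [e1, e2, d_neg h]
  have h1 := sub_odot_compat h x (M.neg a) y (M.neg b)
  have h2 := sub_odot_compat h y (M.neg b) x (M.neg a)
  rw [sub_neg_compat h] at h1 h2
  have h3 := oplus_le_oplus h h1 h2
  rw [oplus_oplus_comm h] at h3
  rw [oplus_comm h (M.sub b a) (M.sub a b)] at h3
  exact h3

end DLem
end MVLib
set_option linter.unusedSectionVars false
namespace MVLib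
section NSum
variable {α : Type*} {M : MVOps α} (h : IsMVAlgebra M)
include h

lemma nsum_zero (n : ℕ) : M.nsum n M.zero = M.zero := by
  induction n with
  | zero => rfl
  | succ n ih => show M.oplus (M.nsum n M.zero) M.zero = M.zero; rw [ih, oplus_zero h]

lemma nsum_one_c (c : α) : M.nsum 1 c = c := by
  show M.oplus (M.nsum 0 c) c = c
  show M.oplus M.zero c = c
  rw [zero_oplus h]

lemma nsum_add (m n : ℕ) (c : α) :
    M.nsum (m + n) c = M.oplus (M.nsum m c) (M.nsum n c) := by
  induction n with
  | zero => show M.nsum m c = M.oplus (M.nsum m c) M.zero; rw [oplus_zero h]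
  | succ n ih =>
    show M.oplus (M.nsum (m + n) c) c = M.oplus (M.nsum m c) (M.oplus (M.nsum n c) c)
    rw [ih, oplus_assoc h]

lemma nsum_le_nsum {m n : ℕ} (hmn : m ≤ n) (c : α) : M.le_s11 (M.nsum m c) (M.nsum n c) := by
  obtain ⟨k, rfl⟩ := Nat.exists_eq_add_of_le hmn
  rw [nsum_add h]
  exact le_oplus_left h _ _

end NSum

/-- honest (non-truncated) sum decomposition: a + b = s with no overflow -/
def Hon {α : Type*} (M : MVOps α) (a b s : α) : Prop :=
  M.oplus a b = s ∧ M.odot a b = M.zero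

section HonL
variable {α : Type*} {M : MVOps α} (h : IsMVAlgebra M)
include h

lemma hon_comm {a b s : α} (H : Hon M a b s) : Hon M b a s :=
  ⟨by rw [oplus_comm h]; exact H.1, by rw [h.odot_comm]; exact H.2⟩

lemma hon_sub {a b s : α} (H : Hon M a b s) : b = M.sub s a := by
  rw [← H.1, oplus_comm h, sub_oplus_of_disj h]
  rw [h.odot_comm]; exact H.2

lemma hon_cancel {a b b' s : α} (H : Hon M a b s) (H' : Hon M a b' s) : b = b' := by
  rw [hon_sub h H, hon_sub h H']

lemma hon_le {a b s : α} (H : Hon M a b s) : M.le_s11 a s := by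
  rw [← H.1]; exact le_oplus_left h _ _

lemma hon_assoc {a b u c s : α} (H1 : Hon M a b u) (H2 : Hon M u c s) :
    Hon M b c (M.oplus b c) ∧ Hon M a (M.oplus b c) s := by
  have hbu : M.le_s11 b u := by rw [← H1.1]; exact le_oplus_right h _ _
  have hbc : M.odot b c = M.zero := by
    apply le_antisymm h _ (zero_le h _)
    have := odot_le_odot h hbu (le_refl h c)
    rw [H2.2] at this
    exact this
  have hlebna : M.le_s11 b (M.neg a) := by rw [← disj_iff h, h.odot_comm]; exact H1.2
  have hcu : M.le_s11 c (M.neg u) := (disj_iff h).mp (hon_comm h H2).2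
  have hnu : M.neg u = M.sub (M.neg a) b := by
    rw [← H1.1]
    show M.neg (M.oplus a b) = _
    rw [neg_oplus h]
    rfl
  have key : M.le_s11 (M.oplus b c) (M.neg a) := by
    have h1 : M.le_s11 (M.oplus b c) (M.oplus b (M.sub (M.neg a) b)) :=
      oplus_le_oplus h (le_refl h b) (by rw [← hnu]; exact hcu)
    rw [oplus_sub_join h] at h1
    have : M.join (M.neg a) b = M.neg a := by
      rw [h.join_comm]
      exact (le_iff_join h).mp hlebna
    rwa [this] at h1
  refine ⟨⟨rfl, hbc⟩, ⟨?_, ?_⟩⟩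
  · rw [← oplus_assoc h, H1.1, H2.1]
  · rw [h.odot_comm, disj_iff h]
    exact key

lemma hon_assoc' {b c u a s : α} (H1 : Hon M b c u) (H2 : Hon M a u s) :
    Hon M a b (M.oplus a b) ∧ Hon M (M.oplus a b) c s := by
  have hbu : M.le_s11 b u := by rw [← H1.1]; exact le_oplus_left h _ _
  have huna : M.le_s11 u (M.neg a) := (disj_iff h).mp (hon_comm h H2).2
  have hab : M.odot a b = M.zero := by
    rw [h.odot_comm]
    exact (disj_iff h).mpr (le_trans h hbu huna)
  have hc : M.le_s11 c (M.sub (M.neg a) b) := by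
    have e : c = M.sub u b := by
      rw [← H1.1, oplus_comm h, sub_oplus_of_disj h (hon_comm h H1).2]
    rw [e]
    exact sub_le_sub h huna (le_refl h b)
  refine ⟨⟨rfl, hab⟩, ⟨?_, ?_⟩⟩
  · rw [oplus_assoc h, H1.1, H2.1]
  · rw [h.odot_comm, disj_iff h]
    have : M.neg (M.oplus a b) = M.sub (M.neg a) b := by
      rw [neg_oplus h]; rfl
    rw [this]
    exact hc

end HonL
end MVLib
set_option linter.unusedSectionVars false
namespace MVLib
section PMV
variable {α : Type*} {M : MVOps α} {p : α → α → α} (h : IsMVAlgebra M)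
  (hp : IsPMVAlgebra M p)
include h hp

lemma p_sub (x a b : α) : p x (M.sub a b) = M.sub (p x a) (p x b) :=
  hp.2.2.2.2 x a b

lemma p_one (x : α) : p x M.one = x := hp.2.2.2.1 x

lemma p_comm (x y : α) : p x y = p y x := hp.2.1 x y

lemma one_p (x : α) : p M.one x = x := by rw [p_comm h hp, p_one h hp]

lemma p_zero (x : α) : p x M.zero = M.zero := by
  have := p_sub h hp x M.one M.one
  rw [sub_self h, p_one h hp, sub_self h] at this
  exact this

lemma zero_p (x : α) : p M.zero x = M.zero := by rw [p_comm h hp, p_zero h hp]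

lemma p_mono_right {a b : α} (x : α) (hab : M.le_s11 a b) : M.le_s11 (p x a) (p x b) := by
  have e : a = M.sub b (M.sub b a) := by
    rw [sub_sub_meet h, h.meet_comm]
    exact ((le_iff_meet h).mp hab).symm
  rw [e, p_sub h hp]
  exact sub_le_self h _ _

lemma p_le_right (x y : α) : M.le_s11 (p x y) y := by
  have h1 : M.le_s11 (p x y) (p y x) := by rw [p_comm h hp]; exact le_refl h _
  have h2 : M.le_s11 (p y x) (p y M.one) := p_mono_right h hp y (le_one h x)
  rw [p_one h hp] at h2
  exact le_trans h h1 h2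

lemma p_le_left (x y : α) : M.le_s11 (p x y) x := by
  rw [p_comm h hp]; exact p_le_right h hp y x

lemma p_mono {a b c e : α} (hab : M.le_s11 a b) (hce : M.le_s11 c e) : M.le_s11 (p a c) (p b e) := by
  have h1 : M.le_s11 (p a c) (p a e) := p_mono_right h hp a hce
  have h2 : M.le_s11 (p a e) (p b e) := by
    rw [p_comm h hp a e, p_comm h hp b e]
    exact p_mono_right h hp e hab
  exact le_trans h h1 h2

/-- additivity of the product over honest sums (in the second argument) -/
lemma p_add {a b : α} (x : α) (hd : M.odot a b = M.zero) :
    Hon M (p x a) (p x b) (p x (M.oplus a b)) := by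
  constructor
  · have e : a = M.sub (M.oplus a b) b := (sub_oplus_of_disj h hd).symm
    have h1 : p x a = M.sub (p x (M.oplus a b)) (p x b) := by
      rw [← p_sub h hp, ← e]
    rw [h1, oplus_comm h, oplus_sub_join h]
    rw [h.join_comm]
    exact (le_iff_join h).mp (p_mono_right h hp x (le_oplus_right h a b))
  · apply le_antisymm h _ (zero_le h _)
    have h1 : M.le_s11 (M.odot (p x a) (p x b)) (M.odot a b) :=
      odot_le_odot h (p_le_right h hp x a) (p_le_right h hp x b)
    rw [hd] at h1
    exact h1

/-- additivity in the first argument -/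
lemma p_add' {a b : α} (y : α) (hd : M.odot a b = M.zero) :
    Hon M (p a y) (p b y) (p (M.oplus a b) y) := by
  have := p_add h hp y hd
  rwa [p_comm h hp y a, p_comm h hp y b, p_comm h hp y (M.oplus a b)] at this

end PMV

section Cong
variable {α : Type*} {M : MVOps α} {r : α → α → Prop} (h : IsMVAlgebra M)
  (hr : IsMVCong M r)
include h hr

lemma cong_neg {a b : α} (H : r a b) : r (M.neg a) (M.neg b) :=
  hr.2.2.2.2 a b M.zero M.zero H (hr.1.refl M.zero)

lemma cong_sub {a b c e : α} (H1 : r a b) (H2 : r c e) : r (M.sub a c) (M.sub b e) :=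
  hr.2.2.2.1 a b _ _ H1 (cong_neg h hr H2)

lemma cong_oplus {a b c e : α} (H1 : r a b) (H2 : r c e) : r (M.oplus a c) (M.oplus b e) :=
  cong_neg h hr (hr.2.2.2.1 _ _ _ _ (cong_neg h hr H1) (cong_neg h hr H2))

lemma cong_nsum {a b : α} (n : ℕ) (H : r a b) : r (M.nsum n a) (M.nsum n b) := by
  induction n with
  | zero => exact hr.1.refl M.zero
  | succ n ih => exact cong_oplus h hr ih H

lemma cong_zero_down {z w : α} (hzw : M.le_s11 z w) (H : r w M.zero) : r z M.zero := by
  have h1 : r (M.meet z w) (M.meet z M.zero) := hr.2.1 z z w M.zero (hr.1.refl z) H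
  have e1 : M.meet z w = z := (le_iff_meet h).mp hzw
  have e2 : M.meet z M.zero = M.zero := by
    rw [h.meet_comm]
    exact (le_iff_meet h).mp (zero_le h z)
  rwa [e1, e2] at h1

lemma cong_of_sub_zero {u v : α} (H1 : r (M.sub u v) M.zero) (H2 : r (M.sub v u) M.zero) :
    r u v := by
  have h1 : r (M.sub u (M.sub u v)) (M.sub u M.zero) :=
    cong_sub h hr (hr.1.refl u) H1
  rw [sub_sub_meet h, sub_zero h] at h1
  have h2 : r (M.sub v (M.sub v u)) (M.sub v M.zero) :=
    cong_sub h hr (hr.1.refl v) H2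
  rw [sub_sub_meet h, sub_zero h] at h2
  exact hr.1.trans (hr.1.symm h1) (by rw [h.meet_comm]; exact h2)

/-- if r identifies 1 and 0 it is full -/
lemma cong_full_of_one_zero (H : r M.one M.zero) : ∀ u v, r u v := by
  have key : ∀ u, r u M.zero := by
    intro u
    have h1 : r (M.odot u M.one) (M.odot u M.zero) :=
      hr.2.2.2.1 u u M.one M.zero (hr.1.refl u) H
    rwa [h.odot_one, odot_zero h] at h1
  intro u v
  exact hr.1.trans (key u) (hr.1.symm (key v))

end Cong

section PCong
variable {α : Type*} {M : MVOps α} {p : α → α → α} {r : α → α → Prop}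
  (h : IsMVAlgebra M) (hp : IsPMVAlgebra M p) (hr : IsMVCong M r)
include h hp hr

lemma p_cong_right {a b : α} (c : α) (H : r a b) : r (p c a) (p c b) := by
  have hab0 : r (M.sub a b) M.zero := by
    have := cong_sub h hr H (hr.1.refl b)
    rwa [sub_self h] at this
  have hba0 : r (M.sub b a) M.zero := by
    have := cong_sub h hr (hr.1.symm H) (hr.1.refl a)
    rwa [sub_self h] at this
  apply cong_of_sub_zero h hr
  · rw [← p_sub h hp]
    exact cong_zero_down h hr (p_le_right h hp c _) hab0
  · rw [← p_sub h hp]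
    exact cong_zero_down h hr (p_le_right h hp c _) hba0

lemma p_cong {a b c e : α} (H1 : r a b) (H2 : r c e) : r (p a c) (p b e) := by
  have s1 : r (p a c) (p a e) := p_cong_right h hp hr a H2
  have s2 : r (p a e) (p b e) := by
    rw [p_comm h hp a e, p_comm h hp b e]
    exact p_cong_right h hp hr e H1
  exact hr.1.trans s1 s2

end PCong
end MVLib
set_option linter.unusedSectionVars false
namespace MVLib
section Simple
variable {α : Type*} {M : MVOps α} (h : IsMVAlgebra M)
include h

/-- the congruence generated by collapsing c to 0 -/
lemma cong_gen (c : α) : IsMVCong M (fun x y => ∃ n, M.le_s11 (M.d x y) (M.nsum n c)) := by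
  have compat : ∀ (op : α → α → α),
      (∀ x a y b, M.le_s11 (M.d (op x a) (op y b)) (M.oplus (M.d x y) (M.d a b))) →
      ∀ a b x y, (∃ n, M.le_s11 (M.d a b) (M.nsum n c)) → (∃ n, M.le_s11 (M.d x y) (M.nsum n c)) →
      ∃ n, M.le_s11 (M.d (op a x) (op b y)) (M.nsum n c) := by
    intro op hop a b x y ⟨n, hn⟩ ⟨m, hm⟩
    refine ⟨n + m, ?_⟩
    have h1 := hop a x b y
    have h2 : M.le_s11 (M.oplus (M.d a b) (M.d x y)) (M.oplus (M.nsum n c) (M.nsum m c)) :=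
      oplus_le_oplus h hn hm
    rw [← nsum_add h] at h2
    exact le_trans h h1 h2
  refine ⟨⟨?_, ?_, ?_⟩, ?_, ?_, ?_, ?_⟩
  · intro x
    exact ⟨0, by rw [d_self h]; exact zero_le h _⟩
  · rintro x y ⟨n, hn⟩
    exact ⟨n, by rwa [d_comm h]⟩
  · rintro x y z ⟨n, hn⟩ ⟨m, hm⟩
    refine ⟨n + m, ?_⟩
    have h1 := d_triangle h x y z
    have h2 : M.le_s11 (M.oplus (M.d x y) (M.d y z)) (M.oplus (M.nsum n c) (M.nsum m c)) :=
      oplus_le_oplus h hn hm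
    rw [← nsum_add h] at h2
    exact le_trans h h1 h2
  · exact compat M.meet (d_le_d_meet h)
  · exact compat M.join (d_le_d_join h)
  · exact compat M.odot (d_le_d_odot h)
  · exact compat M.impl (d_le_d_impl h)

lemma key_meet_oplus (x y z : α) :
    M.le_s11 (M.meet (M.oplus x y) z) (M.oplus (M.meet x z) (M.meet y z)) := by
  set W := M.meet (M.oplus x y) z with hW
  have h1 : M.le_s11 (M.sub W (M.meet x z)) (M.meet y z) := by
    have e : M.sub W (M.meet x z) = M.join (M.odot W (M.neg x)) (M.odot W (M.neg z)) := by
      show M.odot W (M.neg (M.meet x z)) = _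
      rw [neg_meet h, odot_join h]
    rw [e]
    apply join_le h
    · apply le_meet h
      · have h2 : M.le_s11 (M.odot W (M.neg x)) (M.odot (M.oplus x y) (M.neg x)) :=
          odot_le_odot h (meet_le_left h _ _) (le_refl h _)
        have e2 : M.odot (M.oplus x y) (M.neg x) = M.meet y (M.neg x) := by
          rw [oplus_comm h] at *
          exact sub_oplus_meet h y x
        rw [e2] at h2
        exact le_trans h h2 (meet_le_left h _ _)
      · exact le_trans h (odot_le_left h _ _) (meet_le_right h _ _)
    · have h3 : M.le_s11 (M.odot W (M.neg z)) (M.odot z (M.neg z)) :=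
        odot_le_odot h (meet_le_right h _ _) (le_refl h _)
      rw [odot_neg_self h] at h3
      exact le_trans h h3 (zero_le h _)
  rw [sub_le_iff h] at h1
  exact h1

lemma meet_zero_nsum {u v : α} (H : M.meet u v = M.zero) (n : ℕ) :
    M.meet (M.nsum n u) v = M.zero := by
  induction n with
  | zero =>
    show M.meet M.zero v = M.zero
    exact (le_iff_meet h).mp (zero_le h v)
  | succ n ih =>
    apply le_antisymm h _ (zero_le h _)
    have h1 := key_meet_oplus h (M.nsum n u) u v
    rw [ih, H, oplus_zero h] at h1
    exact h1

variable (hs : IsSimpleMV M)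
include hs

lemma zero_ne_one : M.zero ≠ M.one := by
  intro H
  obtain ⟨x, y, hxy⟩ := hs.1
  apply hxy
  have e : ∀ u : α, u = M.zero := by
    intro u
    rw [← h.odot_one u, ← H, odot_zero h]
  rw [e x, e y]

lemma arch {c : α} (hc : c ≠ M.zero) : ∃ n, M.nsum n c = M.one := by
  rcases hs.2 _ (cong_gen h c) with hid | hfull
  · exfalso
    apply hc
    have : ∃ n, M.le_s11 (M.d c M.zero) (M.nsum n c) := by
      refine ⟨1, ?_⟩
      rw [d_zero h, nsum_one_c h]
      exact le_refl h c
    exact (hid c M.zero).mp this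
  · obtain ⟨n, hn⟩ := hfull M.one M.zero
    rw [d_zero h] at hn
    exact ⟨n, le_antisymm h (le_one h _) hn⟩

lemma chain (a b : α) : M.le_s11 a b ∨ M.le_s11 b a := by
  by_contra H
  push_neg at H
  obtain ⟨h1, h2⟩ := H
  have hu : M.sub a b ≠ M.zero := fun He => h1 ((le_iff_sub_zero h).mpr He)
  have hv : M.sub b a ≠ M.zero := fun He => h2 ((le_iff_sub_zero h).mpr He)
  obtain ⟨n, hn⟩ := arch h hs hu
  obtain ⟨m, hm⟩ := arch h hs hv
  have hmeet : M.meet (M.sub a b) (M.sub b a) = M.zero := by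
    rw [← neg_impl h a b, ← neg_impl h b a, ← neg_join h, h.ax7, neg_one h]
  have hz1 : M.meet (M.nsum n (M.sub a b)) (M.sub b a) = M.zero :=
    meet_zero_nsum h hmeet n
  have hz2 : M.meet (M.nsum m (M.sub b a)) (M.nsum n (M.sub a b)) = M.zero := by
    apply meet_zero_nsum h _ m
    rw [h.meet_comm]
    exact hz1
  rw [hn, hm] at hz2
  have : M.one = M.zero := by rw [← hz2, h.meet_one]
  exact zero_ne_one h hs this.symm

/-- in a chain, a truncated sum that is not 1 is honest -/
lemma disj_of_sum_ne_one {a b : α} (H : M.oplus a b ≠ M.one) : M.odot a b = M.zero := by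
  rcases chain h hs a (M.neg b) with hle | hle
  · exact (disj_iff h).mpr hle
  · exfalso
    apply H
    have : M.odot (M.neg a) (M.neg b) = M.zero := by
      apply (disj_iff h).mpr
      rw [neg_neg h]
      have := neg_le_neg h hle
      rwa [neg_neg h] at this
    show M.neg (M.odot (M.neg a) (M.neg b)) = M.one
    rw [this, neg_zero h]

end Simple
end MVLib
set_option linter.unusedSectionVars false
namespace MVLib
section Core
variable {α : Type*}

open scoped Classical
/-- remainder sequence of m·x: add x with truncation, recording via overflow -/
noncomputable def carry (M : MVOps α) (x : α) : ℕ → α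
  | 0 => M.zero
  | n+1 => if M.odot (carry M x n) x = M.zero
      then M.oplus (carry M x n) x else M.odot (carry M x n) x

variable {M : MVOps α} {P Q : α → α → α} (h : IsMVAlgebra M) (hs : IsSimpleMV M)
  (hP : IsPMVAlgebra M P) (hQ : IsPMVAlgebra M Q)
include h hs hP hQ

lemma core_onesided (x y : α) (hle : M.le_s11 (P x y) (Q x y)) : Q x y = P x y := by
  by_cases ht : M.sub (Q x y) (P x y) = M.zero
  · exact le_antisymm h ((le_iff_sub_zero h).mpr ht) hle
  exfalso
  set t := M.sub (Q x y) (P x y) with htdef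
  have hy1 : y ≠ M.one := by
    intro hy
    apply ht
    rw [htdef, hy, p_one h hP, p_one h hQ, sub_self h]
  have Hxy : Hon M (P x y) t (Q x y) := by
    constructor
    · rw [htdef, oplus_sub_join h, h.join_comm]
      exact (le_iff_join h).mp hle
    · rw [htdef]
      show M.odot (P x y) (M.odot (Q x y) (M.neg (P x y))) = M.zero
      rw [← h.odot_assoc, h.odot_comm (P x y) (Q x y), h.odot_assoc,
        odot_neg_self h, odot_zero h]
  obtain ⟨n, hn⟩ := arch h hs ht
  have Inv : ∀ m, Hon M (P (carry M x m) y) (M.nsum m t) (Q (carry M x m) y) := by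
    intro m
    induction m with
    | zero =>
      show Hon M (P M.zero y) M.zero (Q M.zero y)
      rw [zero_p h hP, zero_p h hQ]
      exact ⟨oplus_zero h _, odot_zero h _⟩
    | succ m ih =>
      set c := carry M x m with hcdef
      by_cases hc : M.odot c x = M.zero
      · -- no overflow
        have hcs : carry M x (m+1) = M.oplus c x := by
          show (if M.odot (carry M x m) x = M.zero
            then M.oplus (carry M x m) x else M.odot (carry M x m) x) = M.oplus c x
          rw [← hcdef, if_pos hc]
        have HQ2 : Hon M (Q c y) (Q x y) (Q (M.oplus c x) y) := p_add' h hQ y hc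
        have HP2 : Hon M (P c y) (P x y) (P (M.oplus c x) y) := p_add' h hP y hc
        have step1 := hon_assoc h ih HQ2
        have step2 := hon_assoc h Hxy (hon_comm h step1.1)
        have step3 := hon_assoc' h step2.2 step1.2
        have final := step3.2
        rw [HP2.1] at final
        rw [hcs]
        show Hon M (P (M.oplus c x) y) (M.oplus (M.nsum m t) t) (Q (M.oplus c x) y)
        rwa [oplus_comm h (M.nsum m t) t]
      · -- overflow
        have hnx : M.le_s11 (M.neg x) c := by
          rcases chain h hs c (M.neg x) with hle2 | hle2
          · exact absurd ((disj_iff h).mpr hle2) hc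
          · exact hle2
        have hcs : carry M x (m+1) = M.odot c x := by
          show (if M.odot (carry M x m) x = M.zero
            then M.oplus (carry M x m) x else M.odot (carry M x m) x) = M.odot c x
          rw [← hcdef, if_neg hc]
        set e := M.odot c x with hedef
        have decomp : Hon M (M.neg x) e c := by
          constructor
          · have esub : e = M.sub c (M.neg x) := by
              rw [hedef]
              show M.odot c x = M.odot c (M.neg (M.neg x))
              rw [neg_neg h]
            rw [esub, oplus_sub_join h, h.join_comm]
            exact (le_iff_join h).mp hnx
          · rw [hedef, h.odot_comm (M.neg x) _, h.odot_assoc, odot_neg_self h, odot_zero h]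
        have HQs : Hon M (Q (M.neg x) y) (Q e y) (Q c y) := by
          have := p_add' h hQ y decomp.2
          rwa [decomp.1] at this
        have HPs : Hon M (P (M.neg x) y) (P e y) (P c y) := by
          have := p_add' h hP y decomp.2
          rwa [decomp.1] at this
        have hdx : M.odot (M.neg x) x = M.zero := by
          rw [h.odot_comm]; exact odot_neg_self h x
        have hox : M.oplus (M.neg x) x = M.one := by
          show M.neg (M.odot (M.neg (M.neg x)) (M.neg x)) = M.one
          rw [neg_neg h, odot_neg_self h, neg_zero h]
        have HyQ : Hon M (Q (M.neg x) y) (Q x y) y := by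
          have := p_add' h hQ y hdx
          rwa [hox, one_p h hQ] at this
        have HyP : Hon M (P (M.neg x) y) (P x y) y := by
          have := p_add' h hP y hdx
          rwa [hox, one_p h hP] at this
        have ePnx : P (M.neg x) y = M.sub y (P x y) := hon_sub h (hon_comm h HyP)
        have tle : M.le_s11 t (P (M.neg x) y) := by
          rw [ePnx, htdef]
          exact sub_le_sub h (p_le_right h hQ x y) (le_refl h _)
        have HQP : Hon M (Q (M.neg x) y) t (P (M.neg x) y) := by
          have eq1 : Q (M.neg x) y = M.sub (P (M.neg x) y) t := by
            have e1 : Q (M.neg x) y = M.sub y (Q x y) := hon_sub h (hon_comm h HyQ)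
            rw [e1, ← Hxy.1, ← sub_sub h, ← ePnx]
          constructor
          · rw [eq1, oplus_comm h, oplus_sub_join h, h.join_comm]
            exact (le_iff_join h).mp tle
          · rw [eq1]
            exact sub_odot_cancel h _ _
        have s1 := hon_assoc h HPs ih
        have s2 := hon_assoc h HQP s1.2
        have qe : Q e y = M.oplus t (M.oplus (P e y) (M.nsum m t)) := hon_cancel h HQs s2.2
        have s3 := hon_assoc h s1.1 (hon_comm h s2.1)
        have final := s3.2
        rw [hcs]
        show Hon M (P e y) (M.oplus (M.nsum m t) t) (Q e y)
        rwa [← qe] at final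
  have fin := Inv n
  rw [hn] at fin
  have hq1 : Q (carry M x n) y = M.one := by
    rw [← fin.1, oplus_one h]
  have : M.le_s11 M.one y := by
    rw [← hq1]
    exact p_le_right h hQ _ y
  exact hy1 (le_antisymm h (le_one h y) this)

lemma core_unique : P = Q := by
  funext x y
  rcases chain h hs (P x y) (Q x y) with hle | hle
  · exact (core_onesided h hs hP hQ x y hle).symm
  · exact core_onesided h hs hQ hP x y hle

end Core
end MVLib
set_option linter.unusedSectionVars false
namespace MVLib
section Quot
variable {α : Type*} {M : MVOps α} {r : α → α → Prop}

def congSetoid (hr : IsMVCong M r) : Setoid α := ⟨r, hr.1⟩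

def qops (M : MVOps α) (hr : IsMVCong M r) : MVOps (Quotient (congSetoid hr)) where
  meet := Quotient.map₂ M.meet (fun _ _ ha _ _ hb => hr.2.1 _ _ _ _ ha hb)
  join := Quotient.map₂ M.join (fun _ _ ha _ _ hb => hr.2.2.1 _ _ _ _ ha hb)
  odot := Quotient.map₂ M.odot (fun _ _ ha _ _ hb => hr.2.2.2.1 _ _ _ _ ha hb)
  impl := Quotient.map₂ M.impl (fun _ _ ha _ _ hb => hr.2.2.2.2 _ _ _ _ ha hb)
  zero := Quotient.mk _ M.zero
  one := Quotient.mk _ M.one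

variable (hM : IsMVAlgebra M) (hr : IsMVCong M r)
include hM

lemma qops_mv : IsMVAlgebra (qops M hr) := by
  refine ⟨?_, ?_, ?_, ?_, ?_, ?_, ?_, ?_, ?_, ?_, ?_, ?_, ?_, ?_, ?_, ?_, ?_⟩
  · exact fun X Y => Quotient.inductionOn₂ X Y fun a b => congrArg (Quotient.mk _) (hM.odot_comm a b)
  · exact fun X Y Z => Quotient.inductionOn₃ X Y Z fun a b c => congrArg (Quotient.mk _) (hM.odot_assoc a b c)
  · exact fun X => Quotient.inductionOn X fun a => congrArg (Quotient.mk _) (hM.odot_one a)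
  · exact fun X Y => Quotient.inductionOn₂ X Y fun a b => congrArg (Quotient.mk _) (hM.meet_comm a b)
  · exact fun X Y Z => Quotient.inductionOn₃ X Y Z fun a b c => congrArg (Quotient.mk _) (hM.meet_assoc a b c)
  · exact fun X Y => Quotient.inductionOn₂ X Y fun a b => congrArg (Quotient.mk _) (hM.join_comm a b)
  · exact fun X Y Z => Quotient.inductionOn₃ X Y Z fun a b c => congrArg (Quotient.mk _) (hM.join_assoc a b c)
  · exact fun X Y => Quotient.inductionOn₂ X Y fun a b => congrArg (Quotient.mk _) (hM.absorb_join_meet a b)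
  · exact fun X Y => Quotient.inductionOn₂ X Y fun a b => congrArg (Quotient.mk _) (hM.absorb_meet_join a b)
  · exact fun X => Quotient.inductionOn X fun a => congrArg (Quotient.mk _) (hM.meet_one a)
  · exact fun X => Quotient.inductionOn X fun a => congrArg (Quotient.mk _) (hM.join_zero a)
  · exact fun X Y Z => Quotient.inductionOn₃ X Y Z fun a b c => congrArg (Quotient.mk _) (hM.impl_odot a b c)
  · exact fun X Y => Quotient.inductionOn₂ X Y fun a b => congrArg (Quotient.mk _) (hM.ax4 a b)
  · exact fun X Y => Quotient.inductionOn₂ X Y fun a b => congrArg (Quotient.mk _) (hM.ax5 a b)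
  · exact fun X Y => Quotient.inductionOn₂ X Y fun a b => congrArg (Quotient.mk _) (hM.ax6 a b)
  · exact fun X Y => Quotient.inductionOn₂ X Y fun a b => congrArg (Quotient.mk _) (hM.ax7 a b)
  · exact fun X => Quotient.inductionOn X fun a => congrArg (Quotient.mk _) (hM.ax8 a)

variable {p : α → α → α} (hp : IsPMVAlgebra M p)

noncomputable def qprod : Quotient (congSetoid hr) → Quotient (congSetoid hr) →
    Quotient (congSetoid hr) :=
  Quotient.map₂ p (fun _ _ ha _ _ hb => p_cong hM hp hr ha hb)

lemma qprod_pmv : IsPMVAlgebra (qops M hr) (qprod hM hr hp) := by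
  refine ⟨qops_mv hM hr, ?_, ?_, ?_, ?_⟩
  · exact fun X Y => Quotient.inductionOn₂ X Y fun a b =>
      congrArg (Quotient.mk _) (hp.2.1 a b)
  · exact fun X Y Z => Quotient.inductionOn₃ X Y Z fun a b c =>
      congrArg (Quotient.mk _) (hp.2.2.1 a b c)
  · exact fun X => Quotient.inductionOn X fun a =>
      congrArg (Quotient.mk _) (hp.2.2.2.1 a)
  · exact fun X Y Z => Quotient.inductionOn₃ X Y Z fun a b c =>
      congrArg (Quotient.mk _) (hp.2.2.2.2 a b c)

lemma quot_simple (hmax : IsMaximalMVCong M r) : IsSimpleMV (qops M hr) := by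
  constructor
  · have : ¬ ∀ x y, r x y := hmax.2.1
    push_neg at this
    obtain ⟨x, y, hxy⟩ := this
    exact ⟨Quotient.mk _ x, Quotient.mk _ y, fun He => hxy (Quotient.exact He)⟩
  · intro ρ hρ
    set ρ' : α → α → Prop := fun x y => ρ (Quotient.mk _ x) (Quotient.mk _ y) with hρ'
    have hρ'c : IsMVCong M ρ' := by
      refine ⟨⟨fun x => hρ.1.refl _, fun hxy => hρ.1.symm hxy, fun h1 h2 => hρ.1.trans h1 h2⟩,
        ?_, ?_, ?_, ?_⟩
      · exact fun a b c d h1 h2 => hρ.2.1 _ _ _ _ h1 h2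
      · exact fun a b c d h1 h2 => hρ.2.2.1 _ _ _ _ h1 h2
      · exact fun a b c d h1 h2 => hρ.2.2.2.1 _ _ _ _ h1 h2
      · exact fun a b c d h1 h2 => hρ.2.2.2.2 _ _ _ _ h1 h2
    have hsub : ∀ x y, r x y → ρ' x y := by
      intro x y hxy
      have : (Quotient.mk (congSetoid hr) x) = Quotient.mk _ y := Quotient.sound hxy
      show ρ _ _
      rw [this]
      exact hρ.1.refl _
    rcases hmax.2.2 ρ' hρ'c hsub with hid | hfull
    · left
      intro X Y
      refine Quotient.inductionOn₂ X Y fun a b => ?_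
      constructor
      · intro hab
        exact Quotient.sound ((hid a b).mp hab)
      · intro hab
        exact hsub a b (Quotient.exact hab)
    · right
      intro X Y
      exact Quotient.inductionOn₂ X Y fun a b => hfull a b

end Quot
end MVLib
set_option linter.unusedSectionVars false
namespace MVLib

theorem part1 : ∀ (α : Type) (M : MVOps α), IsSemisimpleMV M →
    ∀ p q : α → α → α, IsPMVAlgebra M p → IsPMVAlgebra M q → p = q := by
  intro α M hA p q hp hq
  funext x y
  apply hA.2
  intro r hmax
  have hr : IsMVCong M r := hmax.1
  have huniq := core_unique (qops_mv hA.1 hr) (quot_simple hA.1 hr hmax)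
    (qprod_pmv hA.1 hr hp) (qprod_pmv hA.1 hr hq)
  have e : qprod hA.1 hr hp (Quotient.mk _ x) (Quotient.mk _ y)
      = qprod hA.1 hr hq (Quotient.mk _ x) (Quotient.mk _ y) := by rw [huniq]
  exact Quotient.exact e

open unitInterval

lemma coe_min (x y : unitInterval) : ((min x y : unitInterval) : ℝ) = min (x : ℝ) (y : ℝ) := by
  rcases le_total x y with hxy | hxy
  · rw [min_eq_left hxy, min_eq_left (Subtype.coe_le_coe.mpr hxy)]
  · rw [min_eq_right hxy, min_eq_right (Subtype.coe_le_coe.mpr hxy)]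

lemma coe_max (x y : unitInterval) : ((max x y : unitInterval) : ℝ) = max (x : ℝ) (y : ℝ) := by
  rcases le_total x y with hxy | hxy
  · rw [max_eq_right hxy, max_eq_right (Subtype.coe_le_coe.mpr hxy)]
  · rw [max_eq_left hxy, max_eq_left (Subtype.coe_le_coe.mpr hxy)]

lemma coe_sodot (x y : unitInterval) : ((stdMV.odot x y : unitInterval) : ℝ)
    = max 0 ((x : ℝ) + y - 1) := rfl

lemma coe_simpl (x y : unitInterval) : ((stdMV.impl x y : unitInterval) : ℝ)
    = min 1 (1 - (x : ℝ) + y) := rfl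

lemma coe_smeet (x y : unitInterval) : ((stdMV.meet x y : unitInterval) : ℝ)
    = min (x : ℝ) (y : ℝ) := coe_min x y

lemma coe_sjoin (x y : unitInterval) : ((stdMV.join x y : unitInterval) : ℝ)
    = max (x : ℝ) (y : ℝ) := coe_max x y

lemma coe_szero : ((stdMV.zero : unitInterval) : ℝ) = 0 := rfl

lemma coe_sone : ((stdMV.one : unitInterval) : ℝ) = 1 := rfl

lemma std_mv : IsMVAlgebra stdMV := by
  constructor <;> intro x <;>
    first
      | (intro y z
         apply Subtype.ext
         simp only [coe_sodot, coe_simpl, coe_smeet, coe_sjoin, coe_szero, coe_sone]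
         have := x.2.1; have := x.2.2; have := y.2.1; have := y.2.2
         have := z.2.1; have := z.2.2
         simp only [max_def, min_def]
         split_ifs <;> linarith)
      | (intro y
         apply Subtype.ext
         simp only [coe_sodot, coe_simpl, coe_smeet, coe_sjoin, coe_szero, coe_sone]
         have := x.2.1; have := x.2.2; have := y.2.1; have := y.2.2
         simp only [max_def, min_def]
         split_ifs <;> linarith)
      | (apply Subtype.ext
         simp only [coe_sodot, coe_simpl, coe_smeet, coe_sjoin, coe_szero, coe_sone]
         have := x.2.1; have := x.2.2
         simp only [max_def, min_def]
         split_ifs <;> linarith)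

end MVLib
set_option linter.unusedSectionVars false
namespace MVLib
open unitInterval

lemma coe_sneg (x : unitInterval) : ((stdMV.neg x : unitInterval) : ℝ) = 1 - x := by
  show ((stdMV.impl x stdMV.zero : unitInterval) : ℝ) = 1 - x
  rw [coe_simpl, coe_szero, add_zero]
  exact min_eq_right (by linarith [x.2.1])

lemma coe_soplus (x y : unitInterval) : ((stdMV.oplus x y : unitInterval) : ℝ)
    = min 1 ((x : ℝ) + y) := by
  show ((stdMV.neg (stdMV.odot (stdMV.neg x) (stdMV.neg y)) : unitInterval) : ℝ) = _
  rw [coe_sneg, coe_sodot, coe_sneg, coe_sneg]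
  have := x.2.1; have := x.2.2; have := y.2.1; have := y.2.2
  simp only [max_def, min_def]
  split_ifs <;> linarith

lemma std_nsum_coe (n : ℕ) (c : unitInterval) :
    ((stdMV.nsum n c : unitInterval) : ℝ) = min 1 (n * (c : ℝ)) := by
  induction n with
  | zero =>
    show ((stdMV.zero : unitInterval) : ℝ) = min 1 ((0:ℕ) * (c:ℝ))
    rw [coe_szero]
    norm_num
  | succ n ih =>
    show ((stdMV.oplus (stdMV.nsum n c) c : unitInterval) : ℝ) = _
    rw [coe_soplus, ih]
    have := c.2.1; have := c.2.2
    push_cast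
    simp only [min_def]
    split_ifs <;> nlinarith

lemma std_simple : IsSimpleMV stdMV := by
  constructor
  · refine ⟨stdMV.zero, stdMV.one, fun He => ?_⟩
    have h2 : ((stdMV.zero : unitInterval) : ℝ) = ((stdMV.one : unitInterval) : ℝ) :=
      congrArg Subtype.val He
    rw [coe_szero, coe_sone] at h2
    norm_num at h2
  · intro r hr
    by_cases hid : ∀ x y, r x y → x = y
    · left
      exact fun x y => ⟨hid x y, fun he => he ▸ hr.1.refl x⟩
    · right
      push_neg at hid
      obtain ⟨a, b, hab, hne⟩ := hid
      have h1 : r (stdMV.sub a b) stdMV.zero := by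
        have := cong_sub std_mv hr hab (hr.1.refl b)
        rwa [sub_self std_mv] at this
      have h2 : r (stdMV.sub b a) stdMV.zero := by
        have := cong_sub std_mv hr (hr.1.symm hab) (hr.1.refl a)
        rwa [sub_self std_mv] at this
      have hrd : r (stdMV.d a b) stdMV.zero := by
        have := cong_oplus std_mv hr h1 h2
        rwa [oplus_zero std_mv] at this
      have hd0 : stdMV.d a b ≠ stdMV.zero := fun He => hne (eq_of_d_zero std_mv He)
      set c := stdMV.d a b with hc
      have hc0 : (0:ℝ) < c := by
        rcases eq_or_lt_of_le c.2.1 with hh | hh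
        · exact absurd (Subtype.ext hh.symm : c = stdMV.zero) hd0
        · exact hh
      obtain ⟨n, hn⟩ := exists_nat_ge (1 / (c:ℝ))
      have hnc : (1:ℝ) ≤ n * c := by
        rw [div_le_iff₀ hc0] at hn
        linarith
      have hone : stdMV.nsum n c = stdMV.one := by
        apply Subtype.ext
        rw [std_nsum_coe, coe_sone]
        exact min_eq_left hnc
      have hr10 : r stdMV.one stdMV.zero := by
        have := cong_nsum std_mv hr n hrd
        rwa [nsum_zero std_mv, hone] at this
      exact cong_full_of_one_zero std_mv hr hr10

lemma std_pmul : IsPMVAlgebra stdMV (fun x y => x * y) := by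
  refine ⟨std_mv, ?_, ?_, ?_, ?_⟩
  · exact fun x y => Subtype.ext (mul_comm (x:ℝ) (y:ℝ))
  · exact fun x y z => Subtype.ext (mul_assoc (x:ℝ) (y:ℝ) (z:ℝ))
  · exact fun x => Subtype.ext (mul_one (x:ℝ))
  · intro x y z
    apply Subtype.ext
    show (x:ℝ) * ((stdMV.odot y (stdMV.neg z) : unitInterval) : ℝ)
        = ((stdMV.odot (x*y) (stdMV.neg (x*z)) : unitInterval) : ℝ)
    have cm : ∀ a b : unitInterval, ((a * b : unitInterval) : ℝ) = (a : ℝ) * (b : ℝ) :=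
      fun _ _ => rfl
    rw [coe_sodot, coe_sneg, coe_sodot, coe_sneg, cm, cm]
    have hx0 := x.2.1; have hx1 := x.2.2
    have hy0 := y.2.1; have hy1 := y.2.2
    have hz0 := z.2.1; have hz1 := z.2.2
    simp only [max_def]
    split_ifs <;> nlinarith

end MVLib

/-- on a semisimple MV-algebra there is at most one product operation
making it a PMV-algebra; in particular ordinary multiplication is the unique product
making [0,1] a PMV-algebra. -/
theorem pmv_product_unique_on_semisimple :
    (∀ (α : Type) (M : MVOps α), IsSemisimpleMV M →
      ∀ p q : α → α → α, IsPMVAlgebra M p → IsPMVAlgebra M q → p = q) ∧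
    (∀ p : unitInterval → unitInterval → unitInterval,
      IsPMVAlgebra stdMV p → p = fun x y => x * y) := by
  constructor
  · exact MVLib.part1
  · intro p hp
    exact MVLib.core_unique MVLib.std_mv MVLib.std_simple hp MVLib.std_pmul
end

section
/- In the product Łukasiewicz calculus PŁ, the formula (α → β) → ((γ•α) → (γ•β)) is a theorem; consequently α ⟺ β ⊢ (γ•α) ⟺ (γ•β), so PŁ is algebraizable in the variety of PMV-algebras. -/
/-- Formulas of the product Łukasiewicz calculus PŁ: variables, 0, →, •. -/
inductive PFm : Type
  | var : ℕ → PFm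
  | bot : PFm
  | impl : PFm → PFm → PFm
  | prod : PFm → PFm → PFm

namespace PFm
/-- ¬α = α → 0. -/
def neg (a : PFm) : PFm := impl a bot
/-- ⊤ = ¬0. -/
def top : PFm := neg bot
/-- α ⊙ β = ¬(α → ¬β). -/
def odot (a b : PFm) : PFm := neg (impl a (neg b))
end PFm

/-- Provability from premises Γ in PŁ: Łukasiewicz axioms Ł1–Ł4, product axioms
PŁ1–PŁ5 (biconditionals given by both implications) and modus ponens. -/
inductive PLProv (Γ : Set PFm) : PFm → Prop
  | prem {a : PFm} : a ∈ Γ → PLProv Γ a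
  | L1 (α β : PFm) : PLProv Γ (α.impl (β.impl α))
  | L2 (α β γ : PFm) : PLProv Γ ((α.impl β).impl ((β.impl γ).impl (α.impl γ)))
  | L3 (α β : PFm) : PLProv Γ ((α.neg.impl β.neg).impl (β.impl α))
  | L4 (α β : PFm) : PLProv Γ (((α.impl β).impl β).impl ((β.impl α).impl α))
  | P1 (α β : PFm) : PLProv Γ ((α.prod β).impl (β.prod α))
  | P2a (α : PFm) : PLProv Γ ((PFm.top.prod α).impl α)
  | P2b (α : PFm) : PLProv Γ (α.impl (PFm.top.prod α))
  | P3 (α β : PFm) : PLProv Γ ((α.prod β).impl β)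
  | P4a (α β γ : PFm) : PLProv Γ (((α.prod β).prod γ).impl (α.prod (β.prod γ)))
  | P4b (α β γ : PFm) : PLProv Γ ((α.prod (β.prod γ)).impl ((α.prod β).prod γ))
  | P5a (α β γ : PFm) :
      PLProv Γ ((α.prod (β.odot γ.neg)).impl ((α.prod β).odot (α.prod γ).neg))
  | P5b (α β γ : PFm) :
      PLProv Γ (((α.prod β).odot (α.prod γ).neg).impl (α.prod (β.odot γ.neg)))
  | mp {α β : PFm} : PLProv Γ (α.impl β) → PLProv Γ α → PLProv Γ β

namespace PLAux
open PFm
variable {Γ : Set PFm}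

/-- Syllogism (transitivity). -/
theorem syl {a b c : PFm} (h1 : PLProv Γ (a.impl b)) (h2 : PLProv Γ (b.impl c)) :
    PLProv Γ (a.impl c) :=
  ((PLProv.L2 a b c).mp h1).mp h2

/-- ((a→b)→c) → (b→c). -/
theorem t0 (a b c : PFm) : PLProv Γ (((a.impl b).impl c).impl (b.impl c)) :=
  (PLProv.L2 b (a.impl b) c).mp (PLProv.L1 b a)

/-- Assertion: a → ((a→b)→b). -/
theorem asr (a b : PFm) : PLProv Γ (a.impl ((a.impl b).impl b)) :=
  (t0 (b.impl a) a ((a.impl b).impl b)).mp (PLProv.L4 b a)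

/-- Double negation elimination. -/
theorem dne (a : PFm) : PLProv Γ (a.neg.neg.impl a) :=
  (PLProv.L3 a a.neg.neg).mp (asr a.neg bot)

/-- Double negation introduction. -/
theorem dni (a : PFm) : PLProv Γ (a.impl a.neg.neg) :=
  (PLProv.L3 a.neg.neg a).mp (dne a.neg)

/-- Prefixing rule. -/
theorem pre {b c : PFm} (a : PFm) (h : PLProv Γ (b.impl c)) :
    PLProv Γ ((a.impl b).impl (a.impl c)) :=
  syl (PLProv.L2 a b c) ((asr (b.impl c) (a.impl c)).mp h)

/-- Contraposition rule. -/
theorem ctr {a b : PFm} (h : PLProv Γ (a.impl b)) : PLProv Γ (b.neg.impl a.neg) :=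
  (PLProv.L2 a b bot).mp h

/-- The key theorem, over an arbitrary premise set. -/
theorem key (α β γ : PFm) :
    PLProv Γ ((α.impl β).impl ((γ.prod α).impl (γ.prod β))) := by
  have h1 : PLProv Γ ((α.impl β).impl (α.impl β.neg.neg)) := pre α (dni β)
  have h2 : PLProv Γ ((α.impl β.neg.neg).impl (α.odot β.neg).neg) :=
    dni (α.impl β.neg.neg)
  have h3 : PLProv Γ ((α.odot β.neg).neg.impl (γ.prod (α.odot β.neg)).neg) :=
    ctr (PLProv.P3 γ (α.odot β.neg))
  have h4 : PLProv Γ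
      ((γ.prod (α.odot β.neg)).neg.impl ((γ.prod α).odot (γ.prod β).neg).neg) :=
    ctr (PLProv.P5b γ α β)
  have h5 : PLProv Γ
      (((γ.prod α).odot (γ.prod β).neg).neg.impl
        ((γ.prod α).impl (γ.prod β).neg.neg)) :=
    dne ((γ.prod α).impl (γ.prod β).neg.neg)
  have h6 : PLProv Γ
      (((γ.prod α).impl (γ.prod β).neg.neg).impl ((γ.prod α).impl (γ.prod β))) :=
    pre (γ.prod α) (dne (γ.prod β))
  exact syl h1 (syl h2 (syl h3 (syl h4 (syl h5 h6))))

end PLAux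

/-- (α → β) → ((γ•α) → (γ•β)) is a theorem of PŁ; consequently
α ⟺ β ⊢ (γ•α) ⟺ (γ•β) (so PŁ is algebraizable in the variety of PMV-algebras
with the Blok–Pigozzi equivalence system {p→q, q→p}). -/
theorem PL_product_congruence_derivable :
    (∀ α β γ : PFm, PLProv ∅ ((α.impl β).impl ((γ.prod α).impl (γ.prod β)))) ∧
    (∀ α β γ : PFm,
      PLProv {α.impl β, β.impl α} ((γ.prod α).impl (γ.prod β)) ∧
      PLProv {α.impl β, β.impl α} ((γ.prod β).impl (γ.prod α))) := by
  refine ⟨fun α β γ => PLAux.key α β γ, fun α β γ => ⟨?_, ?_⟩⟩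
  · exact (PLAux.key α β γ).mp (PLProv.prem (by simp))
  · exact (PLAux.key β α γ).mp (PLProv.prem (by simp))
end
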